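/- arXiv:1802.10277 — 5 statements merged into one kernel-verified Lean document; each statement's English description precedes it below -/
import Mathlib

section
/- Let $R$ be a commutative noetherian ring containing a field, let $L$ be a finitely generated $R$-module, let $\alpha$ be an endomorphism of $L$ with $\operatorname{Im}\alpha=\operatorname{Ker}\alpha$, and let $x\in R$ be an $L$-regular element. Then any $R$-submodule $M$ with $\alpha(L)+xL\subseteq M\subseteq L$ degenerates in the Riedtmann–Zwara sense to $N:=\alpha(M)+x^2L$. -/
/-!
STATEMENT 7: Let `R` be a commutative noetherian ring containing a field,
`L` a finitely generated `R`-module, `α` an endomorphism of `L` with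
`Im α = Ker α`, and `x ∈ R` an `L`-regular element.  Then any `R`-submodule
`M` with `α(L) + xL ⊆ M ⊆ L` degenerates in the Riedtmann–Zwara sense to
`N := α(M) + x²L`.
-/

universe u v w

/-- The data witnessing a Riedtmann–Zwara degeneration of `M` to `N`: a
finitely generated module `Z` and a short exact sequence
`0 → Z → M ⊕ Z → N → 0` whose first map has components `(h, g)` with `g` a
nilpotent endomorphism of `Z`. -/
structure RiedtmannZwaraDatum (R : Type u) [CommRing R]
    (M : Type v) [AddCommGroup M] [Module R M]
    (N : Type w) [AddCommGroup N] [Module R N] : Type (max u (v + 1) w) where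
  Z : Type v
  [addCommGroupZ : AddCommGroup Z]
  [moduleZ : Module R Z]
  finiteZ : Module.Finite R Z
  h : Z →ₗ[R] M
  g : Z →ₗ[R] Z
  p : M × Z →ₗ[R] N
  nilpotent_g : IsNilpotent g
  injective_first : Function.Injective (h.prod g)
  exact_middle : LinearMap.range (h.prod g) = LinearMap.ker p
  surjective_last : Function.Surjective p

/-- `M` degenerates to `N` in the Riedtmann–Zwara sense. -/
def Degenerates (R : Type u) [CommRing R]
    (M : Type v) [AddCommGroup M] [Module R M]
    (N : Type w) [AddCommGroup N] [Module R N] : Prop :=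
  Nonempty (RiedtmannZwaraDatum R M N)

theorem degenerates_of_exact_endomorphism {R : Type u} [CommRing R]
    [IsNoetherianRing R] (F : Type*) [Field F] [Algebra F R]
    {L : Type v} [AddCommGroup L] [Module R L] [Module.Finite R L]
    (α : L →ₗ[R] L) (hα : LinearMap.range α = LinearMap.ker α)
    (x : R) (hreg : ∀ l : L, x • l = 0 → l = 0)
    (M N : Submodule R L)
    (hZM : LinearMap.range α ⊔ LinearMap.range (x • (LinearMap.id : L →ₗ[R] L)) ≤ M)
    (hN : N = Submodule.map α M ⊔
      LinearMap.range ((x ^ 2) • (LinearMap.id : L →ₗ[R] L))) :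
    Degenerates R M N := by
  subst hN
  have hαM : ∀ l : L, α l ∈ M := fun l =>
    hZM (Submodule.mem_sup_left (LinearMap.mem_range_self α l))
  have hxM : ∀ l : L, x • l ∈ M := fun l =>
    hZM (Submodule.mem_sup_right ⟨l, by simp⟩)
  have hα2 : ∀ l : L, α (α l) = 0 := fun l => by
    have h1 : α l ∈ LinearMap.ker α := by rw [← hα]; exact LinearMap.mem_range_self α l
    exact LinearMap.mem_ker.mp h1
  have hker : ∀ l : L, α l = 0 → ∃ c, α c = l := fun l hl => by
    have h1 : l ∈ LinearMap.range α := by rw [hα]; exact LinearMap.mem_ker.mpr hl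
    exact h1
  -- the map `φ : L × L → M × M`, `(a, b) ↦ (α a, α b - x a)`
  have h1 : ∀ c : L × L, (α ∘ₗ LinearMap.fst R L L) c ∈ M := fun c => hαM c.1
  have h2 : ∀ c : L × L,
      (α ∘ₗ LinearMap.snd R L L - x • LinearMap.fst R L L) c ∈ M := fun c => by
    simpa using sub_mem (hαM c.2) (hxM c.1)
  set φ : L × L →ₗ[R] ↥M × ↥M :=
    LinearMap.prod (LinearMap.codRestrict M (α ∘ₗ LinearMap.fst R L L) h1)
      (LinearMap.codRestrict M (α ∘ₗ LinearMap.snd R L L - x • LinearMap.fst R L L) h2)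
    with hφ
  have φ1 : ∀ c : L × L, ((φ c).1 : L) = α c.1 := fun c => rfl
  have φ2 : ∀ c : L × L, ((φ c).2 : L) = α c.2 - x • c.1 := fun c => rfl
  set Zs : Submodule R (↥M × ↥M) := LinearMap.range φ with hZs
  -- the endomorphism `g`
  set j : ↥M × ↥M →ₗ[R] ↥M × ↥M :=
    LinearMap.prod (0 : ↥M × ↥M →ₗ[R] ↥M) (LinearMap.fst R ↥M ↥M) with hj
  have hjZ : ∀ w ∈ Zs, j w ∈ Zs := by
    rintro w ⟨c, rfl⟩
    refine ⟨(0, c.1), ?_⟩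
    have e1' : ((φ (0, c.1)).1 : L) = ((j (φ c)).1 : L) := by
      rw [φ1]; simp [hj]
    have e2' : ((φ (0, c.1)).2 : L) = ((j (φ c)).2 : L) := by
      rw [φ2]; simp [hj, φ1]
    exact Prod.ext (Subtype.ext e1') (Subtype.ext e2')
  -- the map `π : M × Z → L`
  set π : ↥M × ↥Zs →ₗ[R] L :=
    (α ∘ₗ M.subtype ∘ₗ LinearMap.fst R ↥M ↥Zs) +
      (x • (M.subtype ∘ₗ (LinearMap.snd R ↥M ↥M) ∘ₗ Zs.subtype ∘ₗ
        LinearMap.snd R ↥M ↥Zs)) with hπdef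
  have πapp : ∀ (m : ↥M) (z : ↥Zs), π (m, z) = α (m : L) + x • (((z : ↥M × ↥M).2 : L)) :=
    fun m z => rfl
  have hπ : ∀ w : ↥M × ↥Zs,
      π w ∈ Submodule.map α M ⊔ LinearMap.range ((x ^ 2) • (LinearMap.id : L →ₗ[R] L)) := by
    rintro ⟨m, z⟩
    obtain ⟨c, hc⟩ := z.2
    have e2 : (((z : ↥M × ↥M).2 : L)) = α c.2 - x • c.1 := by rw [← hc]; exact φ2 c
    have : π (m, z) = α ((m : L) + x • c.2) + (x ^ 2) • (-c.1) := by
      rw [πapp, e2, map_add, map_smul]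
      module
    rw [this]
    exact add_mem
      (Submodule.mem_sup_left ⟨(m : L) + x • c.2, add_mem m.2 (hxM c.2), rfl⟩)
      (Submodule.mem_sup_right ⟨-c.1, by simp⟩)
  refine ⟨{ Z := ↥Zs
            finiteZ := Module.Finite.range φ
            h := (LinearMap.snd R ↥M ↥M) ∘ₗ Zs.subtype
            g := j.restrict hjZ
            p := LinearMap.codRestrict _ π hπ
            nilpotent_g := ?_
            injective_first := ?_
            exact_middle := ?_
            surjective_last := ?_ }⟩
  · refine ⟨2, ?_⟩
    rw [pow_two]
    ext z <;> rw [Module.End.mul_apply] <;>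
      simp [LinearMap.restrict_coe_apply, hj, LinearMap.prod_apply, Function.prod]
  · rw [← LinearMap.ker_eq_bot]
    refine (Submodule.eq_bot_iff _).mpr fun z hz => ?_
    rw [LinearMap.mem_ker, LinearMap.prod_apply] at hz
    have hz1 : ((LinearMap.snd R ↥M ↥M) ∘ₗ Zs.subtype) z = 0 := congrArg Prod.fst hz
    have hz2 : j.restrict hjZ z = 0 := congrArg Prod.snd hz
    have hz2' : ((z : ↥M × ↥M).1 : L) = 0 := by
      have := congrArg (fun w : ↥Zs => (((w : ↥M × ↥M).2 : L))) hz2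
      simpa [LinearMap.restrict_apply, hj] using this
    have hz1' : ((z : ↥M × ↥M).2 : L) = 0 := congrArg Subtype.val hz1
    refine Subtype.ext (Prod.ext (Subtype.ext hz2') (Subtype.ext hz1'))
  · rw [LinearMap.ker_codRestrict]
    refine le_antisymm ?_ ?_
    · rintro w ⟨z, rfl⟩
      obtain ⟨c, hc⟩ := z.2
      have e1 : (((z : ↥M × ↥M).1 : L)) = α c.1 := by rw [← hc]; exact φ1 c
      have e2 : (((z : ↥M × ↥M).2 : L)) = α c.2 - x • c.1 := by rw [← hc]; exact φ2 c
      rw [LinearMap.mem_ker, LinearMap.prod_apply, πapp]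
      simp only [LinearMap.restrict_coe_apply, LinearMap.coe_comp, Function.comp_apply,
        Submodule.coe_subtype, LinearMap.snd_apply, hj, LinearMap.prod_apply,
        LinearMap.fst_apply, Function.prod]
      rw [e1, e2, map_sub, map_smul, hα2]
      abel
    · rintro ⟨m, z⟩ hw
      rw [LinearMap.mem_ker, πapp] at hw
      obtain ⟨c, hc⟩ := z.2
      have e1 : (((z : ↥M × ↥M).1 : L)) = α c.1 := by rw [← hc]; exact φ1 c
      have e2 : (((z : ↥M × ↥M).2 : L)) = α c.2 - x • c.1 := by rw [← hc]; exact φ2 c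
      have key : x • (x • α c.1) = 0 := by
        have := congrArg α hw
        rw [map_add, hα2, map_smul, e2, map_sub, map_smul, hα2, map_zero,
          zero_add] at this
        rw [zero_sub, smul_neg, neg_eq_zero] at this
        exact this
      have hac1 : α c.1 = 0 := hreg _ (hreg _ key)
      obtain ⟨cc, hcc⟩ := hker c.1 hac1
      set a' : L := c.2 - x • cc with ha'def
      have ha' : α a' = ((z : ↥M × ↥M).2 : L) := by
        rw [ha'def, map_sub, map_smul, hcc, e2]
      have hm0 : α ((m : L) + x • a') = 0 := by
        rw [map_add, map_smul, ha', hw]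
      obtain ⟨b', hb'⟩ := hker _ hm0
      refine ⟨⟨φ (a', b'), LinearMap.mem_range_self φ _⟩, ?_⟩
      rw [LinearMap.prod_apply]
      have k1 : ((φ (a', b')).2 : L) = (m : L) := by
        rw [φ2]
        show α b' - x • a' = (m : L)
        rw [hb']; abel
      have k2 : ((j (φ (a', b'))).1 : L) = ((z : ↥M × ↥M).1 : L) := by
        rw [e1, hac1]
        simp [hj]
      have k3 : ((j (φ (a', b'))).2 : L) = ((z : ↥M × ↥M).2 : L) := by
        rw [← ha']
        simp [hj, φ1]
      exact Prod.ext (Subtype.ext k1)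
        (Subtype.ext (Prod.ext (Subtype.ext k2) (Subtype.ext k3)))
  · rintro ⟨n, hn⟩
    rw [Submodule.mem_sup] at hn
    obtain ⟨y, hy, w, hwmem, hsum⟩ := hn
    obtain ⟨m0, hm0, rfl⟩ := hy
    obtain ⟨l0, rfl⟩ := hwmem
    refine ⟨(⟨m0, hm0⟩, ⟨φ (-l0, 0), LinearMap.mem_range_self φ _⟩), Subtype.ext ?_⟩
    show π (⟨m0, hm0⟩, ⟨φ (-l0, 0), LinearMap.mem_range_self φ _⟩) = n
    rw [πapp]
    show α m0 + x • ((φ (-l0, 0)).2 : L) = n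
    rw [φ2, ← hsum]
    show α m0 + x • (α 0 - x • (-l0)) = α m0 + ((x ^ 2) • (LinearMap.id : L →ₗ[R] L)) l0
    simp [pow_two, mul_smul]
end

section
/- Let $R$ be a commutative noetherian ring containing a field, and let $\cdots\xrightarrow{\alpha}L\xrightarrow{\beta}L\xrightarrow{\alpha}L\xrightarrow{\beta}\cdots$ be an exact sequence of finitely generated $R$-modules. Let $x\in R$ be an $L$-regular element, and set $Z=\alpha(L)+xL$, $W=\beta(L)+xL$. Let $M,N$ be $R$-submodules of $L$ with $Z\subseteq M\subseteq L$ and $W\subseteq N\subseteq L$. Then $M\oplus N$ degenerates in the Riedtmann–Zwara sense to $K:=(\alpha(N)+x^2L)\oplus(\beta(M)+x^2L)$. -/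
/-!
STATEMENT 8: Let `R` be a commutative noetherian ring containing a field, and
let `⋯ →α L →β L →α L →β ⋯` be an exact sequence of finitely generated
`R`-modules.  Let `x ∈ R` be an `L`-regular element, and set `Z = α(L) + xL`,
`W = β(L) + xL`.  Let `M, N` be `R`-submodules of `L` with `Z ⊆ M ⊆ L` and
`W ⊆ N ⊆ L`.  Then `M ⊕ N` degenerates in the Riedtmann–Zwara sense to
`K := (α(N) + x²L) ⊕ (β(M) + x²L)`.
-/

universe u v w

namespace DegenAux

variable {R : Type u} [CommRing R] {L : Type v} [AddCommGroup L] [Module R L]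
variable (α β : L →ₗ[R] L) (x : R) (M N : Submodule R L)

/-- Inductive approximations to the submodule `G`. -/
def Gs : ℕ → Submodule R (L × L)
  | 0 => ⊥
  | (k+1) =>
      { carrier := { p : L × L | p.1 ∈ M ∧ p.2 ∈ N ∧ ∃ q ∈ Gs k,
          (∃ u, x • p.1 + α q.2 = (x ^ 2) • u) ∧ (∃ v, x • p.2 + β q.1 = (x ^ 2) • v) }
        zero_mem' := ⟨M.zero_mem, N.zero_mem, 0, (Gs k).zero_mem,
          ⟨0, by simp⟩, ⟨0, by simp⟩⟩
        add_mem' := by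
          rintro a b ⟨haM, haN, qa, hqa, ⟨ua, hua⟩, ⟨va, hva⟩⟩
            ⟨hbM, hbN, qb, hqb, ⟨ub, hub⟩, ⟨vb, hvb⟩⟩
          refine ⟨M.add_mem haM hbM, N.add_mem haN hbN, qa + qb, (Gs k).add_mem hqa hqb,
            ⟨ua + ub, ?_⟩, ⟨va + vb, ?_⟩⟩
          · simp only [Prod.fst_add, Prod.snd_add, map_add]
            linear_combination (norm := module) hua + hub
          · simp only [Prod.fst_add, Prod.snd_add, map_add]
            linear_combination (norm := module) hva + hvb
        smul_mem' := by
          rintro r a ⟨haM, haN, q, hq, ⟨u, hu⟩, ⟨v, hv⟩⟩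
          refine ⟨M.smul_mem r haM, N.smul_mem r haN, r • q, (Gs k).smul_mem r hq,
            ⟨r • u, ?_⟩, ⟨r • v, ?_⟩⟩
          · simp only [Prod.smul_fst, Prod.smul_snd, map_smul]
            linear_combination (norm := module) r • hu
          · simp only [Prod.smul_fst, Prod.smul_snd, map_smul]
            linear_combination (norm := module) r • hv }

lemma Gs_le_succ : ∀ k, Gs α β x M N k ≤ Gs α β x M N (k+1) := by
  intro k
  induction k with
  | zero => exact bot_le
  | succ k ih =>
    rintro p ⟨hM, hN, q, hq, hu, hv⟩
    exact ⟨hM, hN, q, ih hq, hu, hv⟩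

/-- The submodule `G`. -/
def G : Submodule R (L × L) := ⨆ k, Gs α β x M N k

lemma mem_G {p : L × L} : p ∈ G α β x M N ↔ ∃ k, p ∈ Gs α β x M N k :=
  Submodule.mem_iSup_of_chain ⟨Gs α β x M N, monotone_nat_of_le_succ (Gs_le_succ α β x M N)⟩ p

lemma Gs_mem_G {p : L × L} {k : ℕ} (h : p ∈ Gs α β x M N k) : p ∈ G α β x M N :=
  (mem_G α β x M N).2 ⟨k, h⟩

lemma G_le_prod : ∀ p ∈ G α β x M N, p.1 ∈ M ∧ p.2 ∈ N := by
  intro p hp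
  obtain ⟨k, hk⟩ := (mem_G α β x M N).1 hp
  cases k with
  | zero => simp only [Gs, Submodule.mem_bot] at hk; subst hk; exact ⟨M.zero_mem, N.zero_mem⟩
  | succ k => exact ⟨hk.1, hk.2.1⟩

lemma G_witness {p : L × L} (hp : p ∈ G α β x M N) :
    ∃ q ∈ G α β x M N,
      (∃ u, x • p.1 + α q.2 = (x ^ 2) • u) ∧ (∃ v, x • p.2 + β q.1 = (x ^ 2) • v) := by
  obtain ⟨k, hk⟩ := (mem_G α β x M N).1 hp
  cases k with
  | zero =>
    simp only [Gs, Submodule.mem_bot] at hk; subst hk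
    exact ⟨0, (G α β x M N).zero_mem, ⟨0, by simp⟩, ⟨0, by simp⟩⟩
  | succ k =>
    obtain ⟨_, _, q, hq, hu, hv⟩ := hk
    exact ⟨q, Gs_mem_G α β x M N hq, hu, hv⟩

lemma G_step {p : L × L} (h1 : p.1 ∈ M) (h2 : p.2 ∈ N)
    (h : ∃ q ∈ G α β x M N,
      (∃ u, x • p.1 + α q.2 = (x ^ 2) • u) ∧ (∃ v, x • p.2 + β q.1 = (x ^ 2) • v)) :
    p ∈ G α β x M N := by
  obtain ⟨q, hq, hu, hv⟩ := h
  obtain ⟨k, hk⟩ := (mem_G α β x M N).1 hq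
  exact Gs_mem_G α β x M N (k := k + 1) ⟨h1, h2, q, hk, hu, hv⟩

lemma xx_mem_G (hxM : ∀ l, x • l ∈ M) (hxN : ∀ l, x • l ∈ N) (c c' : L) :
    (x • c, x • c') ∈ G α β x M N := by
  refine Gs_mem_G α β x M N (k := 1) ⟨hxM c, hxN c', 0, Submodule.zero_mem _, ⟨c, ?_⟩, ⟨c', ?_⟩⟩
  · simp only [Prod.snd_zero, map_zero, add_zero]
    module
  · simp only [Prod.fst_zero, map_zero, add_zero]
    module

end DegenAux

namespace DegenAux2

open DegenAux

variable {R : Type u} [CommRing R] {L : Type v} [AddCommGroup L] [Module R L]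
variable {α β : L →ₗ[R] L} {x : R} {M N : Submodule R L}

lemma beta_alpha (hαβ : LinearMap.range α = LinearMap.ker β) (l : L) : β (α l) = 0 :=
  LinearMap.mem_ker.1 (hαβ ▸ LinearMap.mem_range_self α l)

lemma alpha_beta (hβα : LinearMap.range β = LinearMap.ker α) (l : L) : α (β l) = 0 :=
  LinearMap.mem_ker.1 (hβα ▸ LinearMap.mem_range_self β l)

lemma reg2 (hreg : ∀ l : L, x • l = 0 → l = 0) (l : L) (h : (x ^ 2) • l = 0) : l = 0 := by
  rw [pow_two, mul_smul] at h
  exact hreg l (hreg (x • l) h)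

/-- If `α y ∈ x²L` then `y ∈ βL + x²L`. -/
lemma div_alpha (hαβ : LinearMap.range α = LinearMap.ker β)
    (hβα : LinearMap.range β = LinearMap.ker α)
    (hreg : ∀ l : L, x • l = 0 → l = 0)
    {y u : L} (h : α y = (x ^ 2) • u) : ∃ c w, y = β c + (x ^ 2) • w := by
  have hbu : β u = 0 := by
    have h0 : (x ^ 2) • β u = 0 := by
      rw [← map_smul, ← h, beta_alpha hαβ]
    exact reg2 hreg _ h0
  have hu : u ∈ LinearMap.range α := by
    rw [hαβ]; exact LinearMap.mem_ker.2 hbu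
  obtain ⟨w, hw⟩ := hu
  have h2 : α (y - (x ^ 2) • w) = 0 := by
    rw [map_sub, map_smul, hw, h, sub_self]
  have h3 : y - (x ^ 2) • w ∈ LinearMap.range β := by
    rw [hβα]; exact LinearMap.mem_ker.2 h2
  obtain ⟨c, hc⟩ := h3
  exact ⟨c, w, by rw [hc]; abel⟩

/-- If `β y ∈ x²L` then `y ∈ αL + x²L`. -/
lemma div_beta (hαβ : LinearMap.range α = LinearMap.ker β)
    (hβα : LinearMap.range β = LinearMap.ker α)
    (hreg : ∀ l : L, x • l = 0 → l = 0)
    {y u : L} (h : β y = (x ^ 2) • u) : ∃ c w, y = α c + (x ^ 2) • w := by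
  have hau : α u = 0 := by
    have h0 : (x ^ 2) • α u = 0 := by
      rw [← map_smul, ← h, alpha_beta hβα]
    exact reg2 hreg _ h0
  have hu : u ∈ LinearMap.range β := by
    rw [hβα]; exact LinearMap.mem_ker.2 hau
  obtain ⟨w, hw⟩ := hu
  have h2 : β (y - (x ^ 2) • w) = 0 := by
    rw [map_sub, map_smul, hw, h, sub_self]
  have h3 : y - (x ^ 2) • w ∈ LinearMap.range α := by
    rw [hαβ]; exact LinearMap.mem_ker.2 h2
  obtain ⟨c, hc⟩ := h3
  exact ⟨c, w, by rw [hc]; abel⟩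

/-- Key closure step: if `(m'',n'') ∈ M × N` and `q ∈ G` with
`x q₁ + α n'' = 0` and `x q₂ + β m'' = 0` then `(m'',n'') ∈ G`. -/
lemma G_kernel_step (hαβ : LinearMap.range α = LinearMap.ker β)
    (hβα : LinearMap.range β = LinearMap.ker α)
    (hreg : ∀ l : L, x • l = 0 → l = 0)
    (hxM : ∀ l, x • l ∈ M) (hxN : ∀ l, x • l ∈ N)
    {m'' n'' : L} (hm : m'' ∈ M) (hn : n'' ∈ N)
    {q : L × L} (hq : q ∈ G α β x M N)
    (k1 : x • q.1 + α n'' = 0) (k2 : x • q.2 + β m'' = 0) :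
    (m'', n'') ∈ G α β x M N := by
  obtain ⟨q0, hq0, ⟨u₁, hu₁⟩, ⟨u₂, hu₂⟩⟩ := G_witness α β x M N hq
  have e1 : α (q0.2 - n'') = (x ^ 2) • u₁ := by
    simp only [map_sub]
    linear_combination (norm := module) hu₁ - k1
  have e2 : β (q0.1 - m'') = (x ^ 2) • u₂ := by
    simp only [map_sub]
    linear_combination (norm := module) hu₂ - k2
  obtain ⟨c, d, hcd⟩ := div_alpha hαβ hβα hreg e1
  obtain ⟨c', d', hcd'⟩ := div_beta hαβ hβα hreg e2
  obtain ⟨q1, hq1, ⟨w₁, hw₁⟩, ⟨w₂, hw₂⟩⟩ := G_witness α β x M N hq0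
  refine G_step α β x M N hm hn
    ⟨q1 + (x • c, x • c'), (G α β x M N).add_mem hq1 (xx_mem_G α β x M N hxM hxN c c'),
      ⟨w₁ - x • d', ?_⟩, ⟨w₂ - x • d, ?_⟩⟩
  · have hm'' : m'' = q0.1 - α c' - (x ^ 2) • d' := by
      linear_combination (norm := module) -hcd'
    simp only [Prod.snd_add, map_add, map_smul, hm'']
    linear_combination (norm := module) hw₁
  · have hn'' : n'' = q0.2 - β c - (x ^ 2) • d := by
      linear_combination (norm := module) -hcd
    simp only [Prod.fst_add, map_add, map_smul, hn'']
    linear_combination (norm := module) hw₂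

end DegenAux2

namespace DegenAux3

open DegenAux DegenAux2

variable {R : Type u} [CommRing R] {L : Type v} [AddCommGroup L] [Module R L]
variable (α β : L →ₗ[R] L) (x : R) (M N : Submodule R L)

/-- The module `T` used as `Z` in the Riedtmann–Zwara datum. -/
def T : Submodule R ((L × L) × (L × L)) where
  carrier := { P | P.1 ∈ G α β x M N ∧ P.2 ∈ G α β x M N ∧
      β P.1.1 = 0 ∧ α P.1.2 = 0 ∧
      x • P.1.1 + α P.2.2 = 0 ∧ x • P.1.2 + β P.2.1 = 0 }
  zero_mem' := by
    refine ⟨Submodule.zero_mem _, Submodule.zero_mem _, ?_, ?_, ?_, ?_⟩ <;> simp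
  add_mem' := by
    rintro a b ⟨ha1, ha2, ha3, ha4, ha5, ha6⟩ ⟨hb1, hb2, hb3, hb4, hb5, hb6⟩
    refine ⟨Submodule.add_mem _ ha1 hb1, Submodule.add_mem _ ha2 hb2, ?_, ?_, ?_, ?_⟩ <;>
      simp only [Prod.fst_add, Prod.snd_add, map_add]
    · rw [ha3, hb3, add_zero]
    · rw [ha4, hb4, add_zero]
    · linear_combination (norm := module) ha5 + hb5
    · linear_combination (norm := module) ha6 + hb6
  smul_mem' := by
    rintro r a ⟨ha1, ha2, ha3, ha4, ha5, ha6⟩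
    refine ⟨Submodule.smul_mem _ r ha1, Submodule.smul_mem _ r ha2, ?_, ?_, ?_, ?_⟩ <;>
      simp only [Prod.smul_fst, Prod.smul_snd, map_smul]
    · rw [ha3, smul_zero]
    · rw [ha4, smul_zero]
    · linear_combination (norm := module) r • ha5
    · linear_combination (norm := module) r • ha6

end DegenAux3


open DegenAux DegenAux2 DegenAux3 in
theorem direct_sum_degenerates {R : Type u} [CommRing R]
    [IsNoetherianRing R] (F : Type*) [Field F] [Algebra F R]
    {L : Type v} [AddCommGroup L] [Module R L] [Module.Finite R L]
    (α β : L →ₗ[R] L) (x : R)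
    (hαβ : LinearMap.range α = LinearMap.ker β)
    (hβα : LinearMap.range β = LinearMap.ker α)
    (hreg : ∀ l : L, x • l = 0 → l = 0)
    (M N : Submodule R L)
    (hZM : LinearMap.range α ⊔ LinearMap.range (x • (LinearMap.id : L →ₗ[R] L)) ≤ M)
    (hWN : LinearMap.range β ⊔ LinearMap.range (x • (LinearMap.id : L →ₗ[R] L)) ≤ N)
    (K₁ K₂ : Submodule R L)
    (hK₁ : K₁ = Submodule.map α N ⊔
      LinearMap.range ((x ^ 2) • (LinearMap.id : L →ₗ[R] L)))
    (hK₂ : K₂ = Submodule.map β M ⊔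
      LinearMap.range ((x ^ 2) • (LinearMap.id : L →ₗ[R] L))) :
    Degenerates R (↥M × ↥N) (↥K₁ × ↥K₂) := by
  subst hK₁ hK₂
  -- basic membership facts
  have hxM : ∀ l : L, x • l ∈ M := fun l =>
    hZM (Submodule.mem_sup_right ⟨l, by simp⟩)
  have hxN : ∀ l : L, x • l ∈ N := fun l =>
    hWN (Submodule.mem_sup_right ⟨l, by simp⟩)
  have hαM : ∀ l : L, α l ∈ M := fun l =>
    hZM (Submodule.mem_sup_left ⟨l, rfl⟩)
  have hβN : ∀ l : L, β l ∈ N := fun l =>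
    hWN (Submodule.mem_sup_left ⟨l, rfl⟩)
  set Tm : Submodule R ((L × L) × (L × L)) := T α β x M N with hTm
  -- the linear maps of the datum
  have hMmem : ∀ t : Tm, ((t : (L × L) × (L × L)).2.1) ∈ M := fun t =>
    (G_le_prod α β x M N _ t.2.2.1).1
  have hNmem : ∀ t : Tm, ((t : (L × L) × (L × L)).2.2) ∈ N := fun t =>
    (G_le_prod α β x M N _ t.2.2.1).2
  refine ⟨?_⟩
  refine
    { Z := Tm
      finiteZ := ?_
      h := LinearMap.prod
        (LinearMap.codRestrict M
          (LinearMap.fst R L L ∘ₗ LinearMap.snd R (L × L) (L × L) ∘ₗ Tm.subtype) hMmem)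
        (LinearMap.codRestrict N
          (LinearMap.snd R L L ∘ₗ LinearMap.snd R (L × L) (L × L) ∘ₗ Tm.subtype) hNmem)
      g := LinearMap.codRestrict Tm
        (LinearMap.prod 0 (LinearMap.fst R (L × L) (L × L) ∘ₗ Tm.subtype)) ?_
      p := LinearMap.prod
        (LinearMap.codRestrict _
          (x • (LinearMap.fst R L L ∘ₗ LinearMap.snd R (L × L) (L × L) ∘ₗ
              Tm.subtype ∘ₗ LinearMap.snd R (↥M × ↥N) Tm) +
            α ∘ₗ (N.subtype ∘ₗ LinearMap.snd R ↥M ↥N ∘ₗ LinearMap.fst R (↥M × ↥N) Tm)) ?_)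
        (LinearMap.codRestrict _
          (x • (LinearMap.snd R L L ∘ₗ LinearMap.snd R (L × L) (L × L) ∘ₗ
              Tm.subtype ∘ₗ LinearMap.snd R (↥M × ↥N) Tm) +
            β ∘ₗ (M.subtype ∘ₗ LinearMap.fst R ↥M ↥N ∘ₗ LinearMap.fst R (↥M × ↥N) Tm)) ?_)
      nilpotent_g := ?_
      injective_first := ?_
      exact_middle := ?_
      surjective_last := ?_ }
  · -- finiteness
    haveI := isNoetherian_of_isNoetherianRing_of_finite R L
    exact Module.Finite.iff_fg.2 (IsNoetherian.noetherian Tm)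
  · -- g well defined
    intro t
    obtain ⟨h1, h2, h3, h4, h5, h6⟩ := t.2
    exact ⟨Submodule.zero_mem _, h1, by simp, by simp,
      by simpa using h4, by simpa using h3⟩
  · -- p first component lands in K₁
    intro z
    obtain ⟨q, hq, ⟨u, hu⟩, -⟩ := G_witness α β x M N z.2.2.2.1
    have e : x • (z.2 : (L × L) × (L × L)).2.1 + α (z.1.2 : L)
        = α ((z.1.2 : L) - q.2) + (x ^ 2) • u := by
      simp only [map_sub]
      linear_combination (norm := module) hu
    have : (x • (LinearMap.fst R L L ∘ₗ LinearMap.snd R (L × L) (L × L) ∘ₗ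
              Tm.subtype ∘ₗ LinearMap.snd R (↥M × ↥N) Tm) +
            α ∘ₗ (N.subtype ∘ₗ LinearMap.snd R ↥M ↥N ∘ₗ LinearMap.fst R (↥M × ↥N) Tm)) z
        = α ((z.1.2 : L) - q.2) + (x ^ 2) • u := e
    rw [this]
    exact Submodule.add_mem _
      (Submodule.mem_sup_left (Submodule.mem_map_of_mem
        (N.sub_mem z.1.2.2 (G_le_prod α β x M N _ hq).2)))
      (Submodule.mem_sup_right ⟨u, by simp⟩)
  · -- p second component lands in K₂
    intro z
    obtain ⟨q, hq, -, ⟨v, hv⟩⟩ := G_witness α β x M N z.2.2.2.1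
    have e : x • (z.2 : (L × L) × (L × L)).2.2 + β (z.1.1 : L)
        = β ((z.1.1 : L) - q.1) + (x ^ 2) • v := by
      simp only [map_sub]
      linear_combination (norm := module) hv
    have : (x • (LinearMap.snd R L L ∘ₗ LinearMap.snd R (L × L) (L × L) ∘ₗ
              Tm.subtype ∘ₗ LinearMap.snd R (↥M × ↥N) Tm) +
            β ∘ₗ (M.subtype ∘ₗ LinearMap.fst R ↥M ↥N ∘ₗ LinearMap.fst R (↥M × ↥N) Tm)) z
        = β ((z.1.1 : L) - q.1) + (x ^ 2) • v := e
    rw [this]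
    exact Submodule.add_mem _
      (Submodule.mem_sup_left (Submodule.mem_map_of_mem
        (M.sub_mem z.1.1.2 (G_le_prod α β x M N _ hq).1)))
      (Submodule.mem_sup_right ⟨v, by simp⟩)
  · -- nilpotency
    refine ⟨2, ?_⟩
    apply LinearMap.ext
    intro t
    rw [pow_two, Module.End.mul_apply, LinearMap.zero_apply]
    apply Subtype.ext
    rfl
  · -- injectivity
    refine (injective_iff_map_eq_zero _).2 ?_
    intro t ht
    have e1 : (t : (L × L) × L × L).1 = 0 :=
      congrArg (fun z : (↥M × ↥N) × ↥Tm => ((z.2 : (L × L) × L × L)).2) ht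
    have e21 : (t : (L × L) × L × L).2.1 = 0 :=
      congrArg (fun z : (↥M × ↥N) × ↥Tm => ((z.1.1 : L))) ht
    have e22 : (t : (L × L) × L × L).2.2 = 0 :=
      congrArg (fun z : (↥M × ↥N) × ↥Tm => ((z.1.2 : L))) ht
    exact Subtype.ext (Prod.ext e1 (Prod.ext e21 e22))
  · -- exactness
    apply le_antisymm
    · rintro z ⟨t, rfl⟩
      obtain ⟨h1, h2, h3, h4, h5, h6⟩ := t.2
      refine LinearMap.mem_ker.2 (Prod.ext (Subtype.ext ?_) (Subtype.ext ?_))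
      · show x • (t : (L × L) × L × L).1.1 + α ((t : (L × L) × L × L)).2.2 = 0
        exact h5
      · show x • (t : (L × L) × L × L).1.2 + β ((t : (L × L) × L × L)).2.1 = 0
        exact h6
    · rintro ⟨mn, t⟩ hz
      have hpz := LinearMap.mem_ker.1 hz
      have k1 : x • (t : (L × L) × L × L).2.1 + α (mn.2 : L) = 0 :=
        congrArg (fun w => ((w.1 : L))) hpz
      have k2 : x • (t : (L × L) × L × L).2.2 + β (mn.1 : L) = 0 :=
        congrArg (fun w => ((w.2 : L))) hpz
      obtain ⟨h1, h2, h3, h4, h5, h6⟩ := t.2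
      have h5' : x • (t : (L × L) × L × L).1.1 = -(α ((t : (L × L) × L × L)).2.2) :=
        eq_neg_of_add_eq_zero_left h5
      have k2' : x • (t : (L × L) × L × L).2.2 = -(β (mn.1 : L)) :=
        eq_neg_of_add_eq_zero_left k2
      have hm1 : (t : (L × L) × L × L).1.1 = 0 := by
        refine reg2 hreg _ ?_
        calc (x ^ 2) • (t : (L × L) × L × L).1.1
            = x • (x • (t : (L × L) × L × L).1.1) := by rw [pow_two, mul_smul]
          _ = x • (-(α ((t : (L × L) × L × L)).2.2)) := by rw [h5']
          _ = -(α (x • ((t : (L × L) × L × L)).2.2)) := by rw [map_smul, smul_neg]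
          _ = -(α (-(β (mn.1 : L)))) := by rw [k2']
          _ = α (β (mn.1 : L)) := by rw [map_neg, neg_neg]
          _ = 0 := alpha_beta hβα _
      have h6' : x • (t : (L × L) × L × L).1.2 = -(β ((t : (L × L) × L × L)).2.1) :=
        eq_neg_of_add_eq_zero_left h6
      have k1' : x • (t : (L × L) × L × L).2.1 = -(α (mn.2 : L)) :=
        eq_neg_of_add_eq_zero_left k1
      have hn1 : (t : (L × L) × L × L).1.2 = 0 := by
        refine reg2 hreg _ ?_
        calc (x ^ 2) • (t : (L × L) × L × L).1.2
            = x • (x • (t : (L × L) × L × L).1.2) := by rw [pow_two, mul_smul]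
          _ = x • (-(β ((t : (L × L) × L × L)).2.1)) := by rw [h6']
          _ = -(β (x • ((t : (L × L) × L × L)).2.1)) := by rw [map_smul, smul_neg]
          _ = -(β (-(α (mn.2 : L)))) := by rw [k1']
          _ = β (α (mn.2 : L)) := by rw [map_neg, neg_neg]
          _ = 0 := beta_alpha hαβ _
      have c3 : β ((t : (L × L) × L × L)).2.1 = 0 := by
        have h6c := h6
        rw [hn1, smul_zero, zero_add] at h6c
        exact h6c
      have c4 : α ((t : (L × L) × L × L)).2.2 = 0 := by
        have h5c := h5
        rw [hm1, smul_zero, zero_add] at h5c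
        exact h5c
      have hB : (((t : (L × L) × L × L)).2, ((mn.1 : L), (mn.2 : L))) ∈ Tm :=
        ⟨h2, G_kernel_step hαβ hβα hreg hxM hxN mn.1.2 mn.2.2 h2 k1 k2, c3, c4, k1, k2⟩
      refine ⟨⟨_, hB⟩, ?_⟩
      refine Prod.ext (Prod.ext (Subtype.ext rfl) (Subtype.ext rfl)) (Subtype.ext ?_)
      exact Prod.ext (Prod.ext hm1.symm hn1.symm) rfl
  · -- surjectivity
    rintro ⟨k1, k2⟩
    obtain ⟨y1, hy1, z1, hz1, hsum1⟩ := Submodule.mem_sup.1 k1.2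
    obtain ⟨n₀, hn₀, rfl⟩ := Submodule.mem_map.1 hy1
    obtain ⟨l, hl⟩ := hz1
    have hl' : (x ^ 2) • l = z1 := by simpa using hl
    obtain ⟨y2, hy2, z2, hz2, hsum2⟩ := Submodule.mem_sup.1 k2.2
    obtain ⟨m₀, hm₀, rfl⟩ := Submodule.mem_map.1 hy2
    obtain ⟨l', hl2⟩ := hz2
    have hl2' : (x ^ 2) • l' = z2 := by simpa using hl2
    have hA : (((-(α l'), -(β l)) : L × L), ((x • l, x • l') : L × L)) ∈ Tm := by
      refine ⟨?_, xx_mem_G α β x M N hxM hxN l l', ?_, ?_, ?_, ?_⟩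
      · refine G_step α β x M N (M.neg_mem (hαM l')) (N.neg_mem (hβN l))
          ⟨(x • l, x • l'), xx_mem_G α β x M N hxM hxN l l', ⟨0, ?_⟩, ⟨0, ?_⟩⟩
        · rw [map_smul, smul_neg, neg_add_cancel, smul_zero]
        · rw [map_smul, smul_neg, neg_add_cancel, smul_zero]
      · rw [map_neg, beta_alpha hαβ, neg_zero]
      · rw [map_neg, alpha_beta hβα, neg_zero]
      · rw [map_smul, smul_neg, neg_add_cancel]
      · rw [map_smul, smul_neg, neg_add_cancel]
    refine ⟨((⟨m₀, hm₀⟩, ⟨n₀, hn₀⟩), ⟨_, hA⟩), ?_⟩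
    refine Prod.ext (Subtype.ext ?_) (Subtype.ext ?_)
    · show x • (x • l) + α n₀ = (k1 : L)
      linear_combination (norm := module) hsum1 + hl'
    · show x • (x • l') + β m₀ = (k2 : L)
      linear_combination (norm := module) hsum2 + hl2'
end

section
/- Let $R$ be a commutative noetherian ring containing a field. Let $x\in R$ be an element whose annihilator equals the principal ideal it generates, i.e. $(0:_Rx)=(x)$, and let $y\in R$ be a non-zerodivisor. Then for all integers $i\geq j\geq 0$, the ideal $(x,y^j)$ of $R$ degenerates in the Riedtmann–Zwara sense to the ideal $(x,y^{2i-j})$. -/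
/-!
STATEMENT 12: Let `R` be a commutative noetherian ring containing a field.
Let `x ∈ R` be an element with `(0 :_R x) = (x)`, and let `y ∈ R` be a
non-zerodivisor.  Then for all integers `i ≥ j ≥ 0`, the ideal `(x, y^j)`
degenerates in the Riedtmann–Zwara sense to the ideal `(x, y^(2i-j))`.
-/

universe u v w

section Aux

variable {R : Type u} [CommRing R]

/-- a chosen coefficient of `x` for an element of `(x, y^m)`. -/
noncomputable def pickU (x y : R) (m : ℕ) (w : ↥(Ideal.span {x, y ^ m})) : R :=
  (Ideal.mem_span_pair.mp w.2).choose

/-- a chosen coefficient of `y^m` for an element of `(x, y^m)`. -/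
noncomputable def pickV (x y : R) (m : ℕ) (w : ↥(Ideal.span {x, y ^ m})) : R :=
  (Ideal.mem_span_pair.mp w.2).choose_spec.choose

lemma pick_spec (x y : R) (m : ℕ) (w : ↥(Ideal.span {x, y ^ m})) :
    pickU x y m w * x + pickV x y m w * y ^ m = (w : R) :=
  (Ideal.mem_span_pair.mp w.2).choose_spec.choose_spec

/-- the map `u*x + v*y^m ↦ v*x`, well defined when `x^2 = 0` and `y` is a NZD. -/
noncomputable def deltaFun (x y : R) (m : ℕ) (w : ↥(Ideal.span {x, y ^ m})) : R :=
  pickV x y m w * x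

lemma delta_eq {x y : R} (hx2 : x * x = 0) (hy : y ∈ nonZeroDivisors R)
    (m : ℕ) (w : ↥(Ideal.span {x, y ^ m})) {u v : R}
    (hw : u * x + v * y ^ m = (w : R)) : deltaFun x y m w = v * x := by
  have hs := pick_spec x y m w
  have h : u * x + v * y ^ m = pickU x y m w * x + pickV x y m w * y ^ m := by
    rw [hs, hw]
  have h2 : ((pickV x y m w - v) * x) * y ^ m = 0 := by
    linear_combination (-x) * h + (u - pickU x y m w) * hx2
  have h3 : (pickV x y m w - v) * x = 0 :=
    (mem_nonZeroDivisors_iff.mp (pow_mem hy m)).2 _ h2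
  unfold deltaFun
  linear_combination h3

/-- `deltaFun` as a linear map. -/
noncomputable def deltaL {x y : R} (hx2 : x * x = 0) (hy : y ∈ nonZeroDivisors R) (m : ℕ) :
    ↥(Ideal.span {x, y ^ m}) →ₗ[R] R where
  toFun := deltaFun x y m
  map_add' a b := by
    have hrep : (pickU x y m a + pickU x y m b) * x
        + (pickV x y m a + pickV x y m b) * y ^ m
        = ((a + b : ↥(Ideal.span {x, y ^ m})) : R) := by
      push_cast
      linear_combination pick_spec x y m a + pick_spec x y m b
    show deltaFun x y m (a + b) = deltaFun x y m a + deltaFun x y m b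
    rw [delta_eq hx2 hy m _ hrep]
    unfold deltaFun
    ring
  map_smul' c a := by
    have hrep : (c * pickU x y m a) * x + (c * pickV x y m a) * y ^ m
        = ((c • a : ↥(Ideal.span {x, y ^ m})) : R) := by
      have : ((c • a : ↥(Ideal.span {x, y ^ m})) : R) = c * (a : R) := by
        simp [smul_eq_mul]
      rw [this]
      linear_combination c * pick_spec x y m a
    show deltaFun x y m (c • a) = (RingHom.id R) c • deltaFun x y m a
    rw [delta_eq hx2 hy m _ hrep]
    unfold deltaFun
    simp [smul_eq_mul]
    ring

end Aux

theorem ideal_degenerates_of_exact_zerodivisor_pair {R : Type u} [CommRing R]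
    [IsNoetherianRing R] (F : Type*) [Field F] [Algebra F R]
    (x : R) (hx : ∀ r : R, r * x = 0 ↔ r ∈ Ideal.span {x})
    (y : R) (hy : y ∈ nonZeroDivisors R)
    (i j : ℕ) (hij : j ≤ i) :
    Degenerates R
      ↥(Ideal.span {x, y ^ j})
      ↥(Ideal.span {x, y ^ (2 * i - j)}) := by
  classical
  have hx2 : x * x = 0 := (hx x).mpr (Ideal.mem_span_singleton_self x)
  have hxann : ∀ r : R, r * x = 0 → ∃ c : R, c * x = r := fun r hr =>
    Ideal.mem_span_singleton'.mp ((hx r).mp hr)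
  set k := i - j with hk
  have hkj : k + j = i := by omega
  have hyk : ∀ m : ℕ, ∀ r : R, r * y ^ m = 0 → r = 0 := fun m r hr =>
    (mem_nonZeroDivisors_iff.mp (pow_mem hy m)).2 _ hr
  have hxmem : ∀ m : ℕ, x ∈ Ideal.span {x, y ^ m} := fun m =>
    Ideal.subset_span (Set.mem_insert _ _)
  have hymem : ∀ m : ℕ, y ^ m ∈ Ideal.span {x, y ^ m} := fun m =>
    Ideal.subset_span (Set.mem_insert_of_mem _ rfl)
  have hpow : y ^ k * y ^ j = y ^ i := by rw [← pow_add, hkj]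
  have hpowL : y ^ k * y ^ i = y ^ (2 * i - j) := by rw [← pow_add]; congr 1; omega
  have hpow2 : (y ^ k * y ^ i) * y ^ j = y ^ i * y ^ i := by
    rw [← pow_add, ← pow_add, ← pow_add]; congr 1; omega
  have hle : Ideal.span {x, y ^ i} ≤ Ideal.span {x, y ^ j} := by
    rw [Ideal.span_le]
    intro t ht
    simp only [Set.mem_insert_iff, Set.mem_singleton_iff] at ht
    rcases ht with rfl | rfl
    · exact hxmem j
    · rw [← hpow]; exact Ideal.mul_mem_left _ _ (hymem j)
  -- the maps
  let h : ↥(Ideal.span {x, y ^ i}) →ₗ[R] ↥(Ideal.span {x, y ^ j}) :=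
    Submodule.inclusion hle
  have hco : ∀ z : ↥(Ideal.span {x, y ^ i}), ((h z : R)) = (z : R) := fun z => rfl
  let g : ↥(Ideal.span {x, y ^ i}) →ₗ[R] ↥(Ideal.span {x, y ^ i}) :=
    LinearMap.codRestrict _ (deltaL hx2 hy i)
      (fun z => Ideal.mul_mem_left _ _ (hxmem i))
  have hgco : ∀ z : ↥(Ideal.span {x, y ^ i}), ((g z : R)) = deltaFun x y i z :=
    fun z => rfl
  let P : (↥(Ideal.span {x, y ^ j}) × ↥(Ideal.span {x, y ^ i})) →ₗ[R] R :=
    (y ^ k) • ((Ideal.span {x, y ^ i}).subtype.comp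
        (LinearMap.snd R ↥(Ideal.span {x, y ^ j}) ↥(Ideal.span {x, y ^ i})))
      - (deltaL hx2 hy j).comp
        (LinearMap.fst R ↥(Ideal.span {x, y ^ j}) ↥(Ideal.span {x, y ^ i}))
  have hPapp : ∀ wz, P wz = y ^ k * ((wz.2 : R)) - deltaFun x y j wz.1 := by
    intro wz
    simp [P, deltaL, smul_eq_mul]
  have hPmem : ∀ wz, P wz ∈ Ideal.span {x, y ^ (2 * i - j)} := by
    intro wz
    rw [hPapp]
    apply Ideal.mem_span_pair.mpr
    refine ⟨y ^ k * pickU x y i wz.2 - pickV x y j wz.1, pickV x y i wz.2, ?_⟩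
    have h1 := pick_spec x y i wz.2
    rw [← hpowL]
    unfold deltaFun
    linear_combination y ^ k * h1
  let p : (↥(Ideal.span {x, y ^ j}) × ↥(Ideal.span {x, y ^ i})) →ₗ[R]
      ↥(Ideal.span {x, y ^ (2 * i - j)}) :=
    LinearMap.codRestrict _ P hPmem
  have hpco : ∀ wz, ((p wz : R)) = P wz := fun wz => rfl
  refine ⟨{ Z := ↥(Ideal.span {x, y ^ i})
            finiteZ := Module.Finite.iff_fg.mpr (IsNoetherian.noetherian _)
            h := h
            g := g
            p := p
            nilpotent_g := ?_
            injective_first := ?_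
            exact_middle := ?_
            surjective_last := ?_ }⟩
  · -- nilpotency of g
    refine ⟨2, ?_⟩
    have hg2 : ∀ z, g (g z) = 0 := by
      intro z
      apply Subtype.ext
      rw [hgco]
      have hrep : pickV x y i z * x + 0 * y ^ i = ((g z : R)) := by
        rw [hgco]
        unfold deltaFun
        ring
      rw [delta_eq hx2 hy i _ hrep]
      simp
    ext z
    rw [pow_two, Module.End.mul_apply, hg2 z]
    rfl
  · -- injectivity
    intro z₁ z₂ hz
    have h1 : ((z₁ : R)) = ((z₂ : R)) := by
      have := congrArg (fun t => ((t.1 : R))) hz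
      simpa [LinearMap.prod_apply, hco] using this
    exact Subtype.ext h1
  · -- exactness in the middle
    apply le_antisymm
    · rintro wz ⟨z', rfl⟩
      rw [LinearMap.mem_ker]
      apply Subtype.ext
      rw [ZeroMemClass.coe_zero, hpco]
      have hz' := pick_spec x y i z'
      have hrepj : pickU x y i z' * x + (pickV x y i z' * y ^ k) * y ^ j
          = (((h z' : ↥(Ideal.span {x, y ^ j}))) : R) := by
        rw [hco, ← hz']
        linear_combination pickV x y i z' * hpow
      have hP : P ((h.prod g) z') = y ^ k * ((g z' : R)) - deltaFun x y j (h z') := by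
        rw [hPapp]; rfl
      rw [hP, delta_eq hx2 hy j _ hrepj, hgco]
      unfold deltaFun
      ring
    · rintro ⟨w, z⟩ hwz
      rw [LinearMap.mem_ker] at hwz
      have hE0 : P (w, z) = 0 := by
        have := congrArg Subtype.val hwz
        rw [hpco] at this
        simpa using this
      rw [hPapp] at hE0
      set u := pickU x y j w with hu
      set v := pickV x y j w with hv
      set r := pickU x y i z with hr
      set s := pickV x y i z with hsdef
      have hw : u * x + v * y ^ j = (w : R) := pick_spec x y j w
      have hz : r * x + s * y ^ i = (z : R) := pick_spec x y i z
      have hdel : deltaFun x y j w = v * x := rfl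
      rw [hdel] at hE0
      have hE' : y ^ k * (r * x + s * y ^ i) - v * x = 0 := by
        linear_combination hE0 + y ^ k * hz
      have h4 : (s * x) * (y ^ k * y ^ i) = 0 := by
        linear_combination x * hE' + (v - y ^ k * r) * hx2
      have hsx : s * x = 0 := by
        rw [hpowL] at h4
        exact hyk (2 * i - j) _ h4
      obtain ⟨s₂, hs₂⟩ := hxann s hsx
      have h5 : (v - r * y ^ k - s₂ * (y ^ k * y ^ i)) * x = 0 := by
        linear_combination -hE' - (y ^ k * y ^ i) * hs₂
      obtain ⟨v₂, hv₂⟩ := hxann _ h5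
      have hrep2 : (u + v₂ * y ^ j) * x + (r + s₂ * y ^ i) * y ^ i = (w : R) := by
        linear_combination hw + y ^ j * hv₂ - r * hpow - s₂ * hpow2
      have hwmem : (w : R) ∈ Ideal.span {x, y ^ i} :=
        Ideal.mem_span_pair.mpr ⟨u + v₂ * y ^ j, r + s₂ * y ^ i, hrep2⟩
      refine ⟨⟨(w : R), hwmem⟩, ?_⟩
      have hfst : h ⟨(w : R), hwmem⟩ = w := Subtype.ext (by rw [hco])
      have hsnd : g ⟨(w : R), hwmem⟩ = z := by
        apply Subtype.ext
        rw [hgco, delta_eq hx2 hy i _ hrep2]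
        linear_combination hz + y ^ i * hs₂
      show ((h.prod g) ⟨(w : R), hwmem⟩) = (w, z)
      rw [LinearMap.prod_apply]
      exact Prod.ext hfst hsnd
  · -- surjectivity
    intro n
    have hn := pick_spec x y (2 * i - j) n
    refine ⟨(⟨(-(pickU x y (2 * i - j) n)) * y ^ j, Ideal.mul_mem_left _ _ (hymem j)⟩,
             ⟨pickV x y (2 * i - j) n * y ^ i, Ideal.mul_mem_left _ _ (hymem i)⟩), ?_⟩
    apply Subtype.ext
    rw [hpco, hPapp]
    have hd : deltaFun x y j
        (⟨(-(pickU x y (2 * i - j) n)) * y ^ j, Ideal.mul_mem_left _ _ (hymem j)⟩ :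
          ↥(Ideal.span {x, y ^ j}))
        = (-(pickU x y (2 * i - j) n)) * x :=
      delta_eq hx2 hy j (u := 0) _ (by ring)
    rw [hd]
    show y ^ k * (pickV x y (2 * i - j) n * y ^ i) - (-(pickU x y (2 * i - j) n)) * x
        = (n : R)
    linear_combination hn + pickV x y (2 * i - j) n * hpowL
end

section
/- Let $R$ be a commutative noetherian ring containing a field and let $M,N$ be finitely generated $R$-modules. If $M$ degenerates to $N$ in the Riedtmann–Zwara sense and $x\in R$ is an $N$-regular element, then $M/xM$ degenerates to $N/xN$ in the Riedtmann–Zwara sense. -/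
/-!
STATEMENT 13: Let `R` be a commutative noetherian ring containing a field and
let `M, N` be finitely generated `R`-modules.  If `M` degenerates to `N` in
the Riedtmann–Zwara sense and `x ∈ R` is an `N`-regular element, then `M/xM`
degenerates to `N/xN` in the Riedtmann–Zwara sense.
-/

universe u v w

theorem degenerates_quotient_of_regular {R : Type u} [CommRing R]
    [IsNoetherianRing R] (F : Type*) [Field F] [Algebra F R]
    {M : Type v} [AddCommGroup M] [Module R M] [Module.Finite R M]
    {N : Type w} [AddCommGroup N] [Module R N] [Module.Finite R N]
    (hMN : Degenerates R M N)
    (x : R) (hreg : ∀ n : N, x • n = 0 → n = 0) :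
    Degenerates R
      (M ⧸ LinearMap.range (x • (LinearMap.id : M →ₗ[R] M)))
      (N ⧸ LinearMap.range (x • (LinearMap.id : N →ₗ[R] N))) := by
  obtain ⟨D⟩ := hMN
  letI := D.addCommGroupZ
  letI := D.moduleZ
  letI := D.finiteZ
  obtain ⟨Z, finZ, h, g, p, nil, inj, exa, surj⟩ := D
  set IM : Submodule R M := LinearMap.range (x • (LinearMap.id : M →ₗ[R] M)) with hIM
  set IN : Submodule R N := LinearMap.range (x • (LinearMap.id : N →ₗ[R] N)) with hIN
  set IZ : Submodule R Z := LinearMap.range (x • (LinearMap.id : Z →ₗ[R] Z)) with hIZ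
  have memM : ∀ m : M, m ∈ IM ↔ ∃ m', x • m' = m := by
    intro m; simp [hIM, LinearMap.mem_range]
  have memN : ∀ n : N, n ∈ IN ↔ ∃ n', x • n' = n := by
    intro n; simp [hIN, LinearMap.mem_range]
  have memZ : ∀ z : Z, z ∈ IZ ↔ ∃ z', x • z' = z := by
    intro z; simp [hIZ, LinearMap.mem_range]
  have hZM : IZ ≤ IM.comap h := by
    rintro z hz
    obtain ⟨z', rfl⟩ := (memZ z).1 hz
    exact (memM _).2 ⟨h z', (map_smul h x z').symm⟩
  have hZZ : IZ ≤ IZ.comap g := by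
    rintro z hz
    obtain ⟨z', rfl⟩ := (memZ z).1 hz
    exact (memZ _).2 ⟨g z', (map_smul g x z').symm⟩
  have hMN1 : IM ≤ IN.comap (p.comp (LinearMap.inl R M Z)) := by
    rintro m hm
    obtain ⟨m', rfl⟩ := (memM m).1 hm
    refine (memN _).2 ⟨p (m', 0), ?_⟩
    simp [← map_smul]
  have hZN1 : IZ ≤ IN.comap (p.comp (LinearMap.inr R M Z)) := by
    rintro z hz
    obtain ⟨z', rfl⟩ := (memZ z).1 hz
    refine (memN _).2 ⟨p (0, z'), ?_⟩
    simp [← map_smul]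
  set hbar := IZ.mapQ IM h hZM with hhbar
  set gbar := IZ.mapQ IZ g hZZ with hgbar
  set pbar := (IM.mapQ IN (p.comp (LinearMap.inl R M Z)) hMN1).coprod
      (IZ.mapQ IN (p.comp (LinearMap.inr R M Z)) hZN1) with hpbar
  have hp : ∀ (m : M) (z : Z),
      pbar (Submodule.Quotient.mk m, Submodule.Quotient.mk z)
        = Submodule.Quotient.mk (p (m, z)) := by
    intro m z
    have : p (m, 0) + p (0, z) = p (m, z) := by
      rw [← map_add]; simp
    simp [hpbar, LinearMap.coprod_apply, Submodule.mapQ_apply, ← Submodule.Quotient.mk_add, this]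
  refine ⟨⟨Z ⧸ IZ, Module.Finite.quotient R _, hbar, gbar, pbar, ?_, ?_, ?_, ?_⟩⟩
  · obtain ⟨n, hn⟩ := nil
    refine ⟨n, ?_⟩
    rw [hgbar, ← IZ.mapQ_pow hZZ n]
    ext z
    simp only [Submodule.mkQ_apply, Submodule.mapQ_apply, LinearMap.zero_apply,
      LinearMap.comp_apply]
    rw [hn]
    simp
  · rw [← LinearMap.ker_eq_bot]
    rw [eq_bot_iff]
    rintro zq hzq
    obtain ⟨z, rfl⟩ := IZ.mkQ_surjective zq
    simp only [LinearMap.mem_ker, LinearMap.prod_apply, Prod.mk_eq_zero, Function.prod] at hzq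
    obtain ⟨h1, h2⟩ := hzq
    have hm : h z ∈ IM := by
      rw [hhbar, Submodule.mkQ_apply, Submodule.mapQ_apply, Submodule.Quotient.mk_eq_zero] at h1
      exact h1
    have hzz : g z ∈ IZ := by
      rw [hgbar, Submodule.mkQ_apply, Submodule.mapQ_apply, Submodule.Quotient.mk_eq_zero] at h2
      exact h2
    obtain ⟨m', hm'⟩ := (memM _).1 hm
    obtain ⟨z', hz'⟩ := (memZ _).1 hzz
    have hker : (h z, g z) ∈ LinearMap.ker p := by
      rw [← exa]; exact ⟨z, rfl⟩
    have hpx : x • p (m', z') = 0 := by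
      rw [← map_smul]
      have : x • (m', z') = (h z, g z) := by
        rw [Prod.smul_mk, hm', hz']
      rw [this]; exact hker
    have hp0 : p (m', z') = 0 := hreg _ hpx
    have : (m', z') ∈ LinearMap.range (h.prod g) := by rw [exa]; exact hp0
    obtain ⟨w, hw⟩ := this
    have hzw : z = x • w := by
      apply inj
      rw [map_smul, hw, Prod.smul_mk, hm', hz']
      rfl
    simp only [Submodule.mem_bot, Submodule.mkQ_apply, Submodule.Quotient.mk_eq_zero]
    rw [hzw]
    exact (memZ _).2 ⟨w, rfl⟩
  · apply le_antisymm
    · rintro _ ⟨zq, rfl⟩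
      obtain ⟨z, rfl⟩ := IZ.mkQ_surjective zq
      have e0 : (hbar.prod gbar) (IZ.mkQ z)
          = (Submodule.Quotient.mk (h z), Submodule.Quotient.mk (g z)) := rfl
      rw [LinearMap.mem_ker, e0, hp]
      have hk : p (h z, g z) = 0 := by
        have : (h z, g z) ∈ LinearMap.ker p := by rw [← exa]; exact ⟨z, rfl⟩
        exact this
      rw [hk]
      exact Submodule.Quotient.mk_eq_zero _ |>.2 (Submodule.zero_mem _)
    · rintro ⟨mq, zq⟩ hker
      obtain ⟨m, rfl⟩ := IM.mkQ_surjective mq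
      obtain ⟨z, rfl⟩ := IZ.mkQ_surjective zq
      rw [LinearMap.mem_ker] at hker
      simp only [Submodule.mkQ_apply] at hker ⊢
      rw [hp, Submodule.Quotient.mk_eq_zero] at hker
      obtain ⟨n', hn'⟩ := (memN _).1 hker
      obtain ⟨⟨m', z'⟩, hm'z'⟩ := surj n'
      have hker2 : ((m, z) - x • (m', z')) ∈ LinearMap.ker p := by
        rw [LinearMap.mem_ker, map_sub, map_smul, hm'z', hn', sub_self]
      rw [← exa] at hker2
      obtain ⟨w, hw⟩ := hker2
      have hw1 : h w = m - x • m' := congrArg Prod.fst hw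
      have hw2 : g w = z - x • z' := congrArg Prod.snd hw
      refine ⟨Submodule.Quotient.mk w, ?_⟩
      have e1 : hbar (Submodule.Quotient.mk w) = Submodule.Quotient.mk m := by
        rw [hhbar, Submodule.mapQ_apply, Submodule.Quotient.eq, hw1]
        refine (memM _).2 ⟨-m', ?_⟩
        rw [smul_neg]
        abel
      have e2 : gbar (Submodule.Quotient.mk w) = Submodule.Quotient.mk z := by
        rw [hgbar, Submodule.mapQ_apply, Submodule.Quotient.eq, hw2]
        refine (memZ _).2 ⟨-z', ?_⟩
        rw [smul_neg]
        abel
      have e0 : (hbar.prod gbar) (Submodule.Quotient.mk w)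
          = (hbar (Submodule.Quotient.mk w), gbar (Submodule.Quotient.mk w)) := rfl
      rw [e0, e1, e2]
  · rintro nq
    obtain ⟨n, rfl⟩ := IN.mkQ_surjective nq
    obtain ⟨⟨m, z⟩, hmz⟩ := surj n
    exact ⟨(Submodule.Quotient.mk m, Submodule.Quotient.mk z), by rw [hp, hmz]; rfl⟩
end

section
/- Let $k$ be an algebraically closed field of characteristic not two and let $R=k[\![x,y]\!]/(x^2)$. Then for every integer $m\geq 0$, the free module $R$ does not degenerate to the ideal $(x,y^{2m+1})R$. -/
/-!
STATEMENT 15: Let `k` be an algebraically closed field of characteristic not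
two and let `R = k⟦x, y⟧/(x²)`.  Then for every integer `m ≥ 0`, the free
module `R` does not degenerate to the ideal `(x, y^(2m+1))R`.
-/

universe u v w

/-- The hypersurface `k⟦x, y⟧/(x²)` of type `(A_∞)` in dimension one. -/
abbrev AInfCurve (k : Type u) [Field k] : Type u :=
  MvPowerSeries (Fin 2) k ⧸
    (Ideal.span {(MvPowerSeries.X 0 : MvPowerSeries (Fin 2) k) ^ 2})

/-- The ideal `(x, yⁿ)` of `k⟦x, y⟧/(x²)`. -/
noncomputable def idealXY (k : Type u) [Field k] (n : ℕ) : Ideal (AInfCurve k) :=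
  Ideal.span
    {Ideal.Quotient.mk _ (MvPowerSeries.X 0),
     Ideal.Quotient.mk _ (MvPowerSeries.X 1 ^ n)}

open MvPowerSeries Finsupp

set_option synthInstance.maxHeartbeats 1000000
set_option maxHeartbeats 2000000

namespace DegenAux

variable {k : Type u} [Field k]


variable {k : Type u} [Field k]

/-- If all coefficients of `f` with `s`-exponent `< a` vanish, then `X s ^ a ∣ f`. -/
theorem xpow_dvd {s : Fin 2} {a : ℕ} {f : MvPowerSeries (Fin 2) k}
    (hf : ∀ d : Fin 2 →₀ ℕ, d s < a → MvPowerSeries.coeff d f = 0) :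
    (MvPowerSeries.X s : MvPowerSeries (Fin 2) k) ^ a ∣ f := by
  classical
  refine ⟨(id (fun d => MvPowerSeries.coeff (d + Finsupp.single s a) f) : MvPowerSeries (Fin 2) k), ?_⟩
  ext d
  rw [X_pow_eq, coeff_monomial_mul]
  split_ifs with hle
  · rw [one_mul]
    have h1 : (d - Finsupp.single s a) + Finsupp.single s a = d :=
      tsub_add_cancel_of_le hle
    show f d = MvPowerSeries.coeff (d - Finsupp.single s a)
        (fun e => MvPowerSeries.coeff (e + Finsupp.single s a) f)
    show f d = MvPowerSeries.coeff ((d - Finsupp.single s a) + Finsupp.single s a) f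
    rw [h1]
    rfl
  · have hlt : d s < a := by
      by_contra hc
      exact hle (by
        rw [Finsupp.single_le_iff]
        omega)
    show f d = (0 : k)
    rw [← hf d hlt]
    rfl

theorem X_mul_cancel {s : Fin 2} {f : MvPowerSeries (Fin 2) k}
    (hf : (MvPowerSeries.X s : MvPowerSeries (Fin 2) k) * f = 0) : f = 0 := by
  classical
  ext d
  have := congrArg (MvPowerSeries.coeff (Finsupp.single s 1 + d)) hf
  rw [X_def, coeff_add_monomial_mul, one_mul, map_zero] at this
  simpa using this

theorem coeff_single1_X0_mul {f : MvPowerSeries (Fin 2) k} (j : ℕ) :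
    MvPowerSeries.coeff (Finsupp.single 1 j) ((MvPowerSeries.X 0) * f) = 0 := by
  classical
  rw [X_def, coeff_monomial_mul, if_neg]
  intro hle
  have := (Finsupp.single_le_iff).1 hle
  simp at this

theorem coeff_single1_X1pow_mul {f : MvPowerSeries (Fin 2) k} {n j : ℕ} (hj : j < n) :
    MvPowerSeries.coeff (Finsupp.single 1 j) ((MvPowerSeries.X 1) ^ n * f) = 0 := by
  classical
  rw [X_pow_eq, coeff_monomial_mul, if_neg]
  intro hle
  have := (Finsupp.single_le_iff).1 hle
  simp at this
  omega

theorem eq_single_of_fst_eq_zero {d : Fin 2 →₀ ℕ} (hd : d 0 = 0) :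
    d = Finsupp.single 1 (d 1) := by
  classical
  ext i
  fin_cases i
  · simpa [Finsupp.single_apply] using hd
  · simp [Finsupp.single_apply]



noncomputable def xi (k : Type u) [Field k] : AInfCurve k :=
  Ideal.Quotient.mk _ (MvPowerSeries.X 0)

theorem xi_sq : xi k * xi k = 0 := by
  rw [xi, ← map_mul, ← pow_two, Ideal.Quotient.eq_zero_iff_mem]
  exact Ideal.subset_span (Set.mem_singleton _)

theorem ann_xi (r : AInfCurve k) (hr : xi k * r = 0) : ∃ s, r = xi k * s := by
  obtain ⟨F, rfl⟩ := Ideal.Quotient.mk_surjective r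
  rw [xi, ← map_mul, Ideal.Quotient.eq_zero_iff_mem, Ideal.mem_span_singleton] at hr
  obtain ⟨G, hG⟩ := hr
  have hzero : (MvPowerSeries.X 0 : MvPowerSeries (Fin 2) k) * (F - MvPowerSeries.X 0 * G) = 0 := by
    rw [mul_sub, hG]
    ring
  have hFG : F = MvPowerSeries.X 0 * G := by
    have := X_mul_cancel hzero
    rwa [sub_eq_zero] at this
  exact ⟨Ideal.Quotient.mk _ G, by rw [hFG, map_mul]; rfl⟩

theorem mem_idealXY_ann (n : ℕ) (v : AInfCurve k) (hv : v ∈ idealXY k n)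
    (hxv : xi k * v = 0) : ∃ a, v = xi k * a := by
  rw [idealXY, Ideal.mem_span_pair] at hv
  obtain ⟨a, b, rfl⟩ := hv
  have hxx : (Ideal.Quotient.mk (Ideal.span {(MvPowerSeries.X 0 : MvPowerSeries (Fin 2) k) ^ 2})
      (MvPowerSeries.X 0)) = xi k := rfl
  rw [hxx] at hxv ⊢
  set w : AInfCurve k := Ideal.Quotient.mk _ (MvPowerSeries.X 1 ^ n) with hw
  have h1 : xi k * (b * w) = 0 := by
    have h2 : xi k * (a * xi k) = 0 := by
      rw [show xi k * (a * xi k) = a * (xi k * xi k) by ring, xi_sq, mul_zero]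
    calc xi k * (b * w) = xi k * (a * xi k + b * w) - xi k * (a * xi k) := by ring
    _ = 0 := by rw [hxv, h2, sub_zero]
  obtain ⟨s, hs⟩ := ann_xi _ h1
  refine ⟨a + s, ?_⟩
  rw [mul_add, ← hs]
  ring

/-- The quotient by `(x, yⁿ)` is `n`-dimensional over `k`. -/
noncomputable def quotIdealXYEquiv (n : ℕ) :
    (AInfCurve k ⧸ idealXY k n) ≃ₗ[k] (Fin n → k) := by
  classical
  set I0 : Ideal (MvPowerSeries (Fin 2) k) :=
    Ideal.span {(MvPowerSeries.X 0 : MvPowerSeries (Fin 2) k) ^ 2} with hI0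
  set J0 : Ideal (MvPowerSeries (Fin 2) k) :=
    Ideal.span {(MvPowerSeries.X 0 : MvPowerSeries (Fin 2) k),
      (MvPowerSeries.X 1 : MvPowerSeries (Fin 2) k) ^ n} with hJ0
  -- step A : idealXY k n = J0.map (mkₐ)
  have hA : idealXY k n = J0.map (Ideal.Quotient.mkₐ k I0) := by
    rw [hJ0, idealXY, Ideal.map_span]
    congr 1
    rw [Set.image_insert_eq, Set.image_singleton]
    simp [Ideal.Quotient.mkₐ_eq_mk]
    rfl
  have hsup : I0 ⊔ J0 = J0 := by
    rw [sup_eq_right, hI0, Ideal.span_le, Set.singleton_subset_iff]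
    exact SetLike.mem_coe.2 (Ideal.mem_span_pair.2 ⟨MvPowerSeries.X 0, 0, by ring⟩)
  -- Φ and the linear equivalence S⧸J0 ≃ₗ[k] Fin n → k
  let Φ : MvPowerSeries (Fin 2) k →ₗ[k] (Fin n → k) :=
    LinearMap.pi (fun j => MvPowerSeries.coeff (Finsupp.single 1 (j : ℕ)))
  have hker1 : J0.restrictScalars k ≤ LinearMap.ker Φ := by
    intro f hf
    have hf' : f ∈ J0 := hf
    rw [hJ0, Ideal.mem_span_pair] at hf'
    obtain ⟨a, b, rfl⟩ := hf'
    rw [LinearMap.mem_ker]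
    funext j
    have e1 : a * MvPowerSeries.X 0 = MvPowerSeries.X 0 * a := mul_comm _ _
    have e2 : b * MvPowerSeries.X 1 ^ n = MvPowerSeries.X 1 ^ n * b := mul_comm _ _
    simp only [Φ, LinearMap.pi_apply, map_add, e1, e2]
    rw [coeff_single1_X0_mul, coeff_single1_X1pow_mul j.2, add_zero]
    rfl
  have hker2 : LinearMap.ker Φ ≤ J0.restrictScalars k := by
    intro f hf
    rw [LinearMap.mem_ker] at hf
    have hcf : ∀ j : ℕ, j < n → MvPowerSeries.coeff (Finsupp.single 1 j) f = 0 := by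
      intro j hj
      exact congrFun hf ⟨j, hj⟩
    set g1 : MvPowerSeries (Fin 2) k :=
      (fun d => MvPowerSeries.coeff (d + Finsupp.single 0 1) f : MvPowerSeries (Fin 2) k) with hg1
    set h : MvPowerSeries (Fin 2) k := f - MvPowerSeries.X 0 * g1 with hh
    have hhc : ∀ d : Fin 2 →₀ ℕ, d 1 < n → MvPowerSeries.coeff d h = 0 := by
      intro d hd
      by_cases hd0 : d 0 = 0
      · have hX0 : MvPowerSeries.coeff d (MvPowerSeries.X 0 * g1) = 0 := by
          rw [MvPowerSeries.X_def, MvPowerSeries.coeff_monomial_mul, if_neg]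
          intro hle
          have := Finsupp.single_le_iff.1 hle
          omega
        have hfd : MvPowerSeries.coeff d f = 0 := by
          rw [eq_single_of_fst_eq_zero hd0]
          exact hcf (d 1) hd
        rw [hh, map_sub, hfd, hX0, sub_zero]
      · have hle : Finsupp.single (0 : Fin 2) 1 ≤ d := by
          rw [Finsupp.single_le_iff]
          omega
        have hX0 : MvPowerSeries.coeff d (MvPowerSeries.X 0 * g1) =
            MvPowerSeries.coeff d f := by
          rw [MvPowerSeries.X_def, MvPowerSeries.coeff_monomial_mul, if_pos hle, one_mul]
          show MvPowerSeries.coeff ((d - Finsupp.single 0 1) + Finsupp.single 0 1) f = _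
          rw [tsub_add_cancel_of_le hle]
        rw [hh, map_sub, hX0, sub_self]
    obtain ⟨g2, hg2⟩ := xpow_dvd (s := 1) (a := n) hhc
    have hf0 : f = MvPowerSeries.X 0 * g1 + MvPowerSeries.X 1 ^ n * g2 := by
      rw [← hg2, hh]; ring
    show f ∈ J0
    rw [hf0, hJ0]
    exact Ideal.add_mem _
      (Ideal.mul_mem_right _ _ (Ideal.subset_span (Set.mem_insert _ _)))
      (Ideal.mul_mem_right _ _
        (Ideal.subset_span (Set.mem_insert_of_mem _ (Set.mem_singleton _))))
  have hsurj : Function.Surjective Φ := by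
    intro c
    refine ⟨∑ j : Fin n, MvPowerSeries.monomial (Finsupp.single 1 (j : ℕ)) (c j), ?_⟩
    funext i
    have hsingle : ∀ i j : Fin n,
        (Finsupp.single (1 : Fin 2) (i : ℕ) = Finsupp.single 1 (j : ℕ)) ↔ i = j := by
      intro i j
      rw [(Finsupp.single_injective (1 : Fin 2)).eq_iff]
      exact ⟨fun hh => Fin.ext hh, fun hh => by rw [hh]⟩
    simp only [Φ, LinearMap.pi_apply, map_sum, MvPowerSeries.coeff_monomial, hsingle]
    rw [Finset.sum_ite_eq (Finset.univ : Finset (Fin n)) i c]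
    simp
  let Φq : (MvPowerSeries (Fin 2) k ⧸ J0.restrictScalars k) →ₗ[k] (Fin n → k) :=
    Submodule.liftQ (J0.restrictScalars k) Φ hker1
  have hΦq : Function.Bijective Φq := by
    constructor
    · rw [← LinearMap.ker_eq_bot]
      exact Submodule.ker_liftQ_eq_bot _ _ _ hker2
    · intro c
      obtain ⟨f, hf⟩ := hsurj c
      exact ⟨Submodule.Quotient.mk f, hf⟩
  let E1 : (MvPowerSeries (Fin 2) k ⧸ J0.restrictScalars k) ≃ₗ[k] (Fin n → k) :=
    LinearEquiv.ofBijective Φq hΦq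
  let E2 : (MvPowerSeries (Fin 2) k ⧸ J0) ≃ₗ[k] (Fin n → k) :=
    (Submodule.Quotient.restrictScalarsEquiv k J0).symm.trans E1
  -- assemble
  let EA : (AInfCurve k ⧸ idealXY k n) ≃ₐ[k]
      ((MvPowerSeries (Fin 2) k ⧸ I0) ⧸ J0.map (Ideal.Quotient.mkₐ k I0)) :=
    Ideal.quotientEquivAlgOfEq k hA
  let EB : ((MvPowerSeries (Fin 2) k ⧸ I0) ⧸ J0.map (Ideal.Quotient.mkₐ k I0)) ≃ₐ[k]
      (MvPowerSeries (Fin 2) k ⧸ I0 ⊔ J0) :=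
    DoubleQuot.quotQuotEquivQuotSupₐ k I0 J0
  let EC : (MvPowerSeries (Fin 2) k ⧸ I0 ⊔ J0) ≃ₐ[k] (MvPowerSeries (Fin 2) k ⧸ J0) :=
    Ideal.quotientEquivAlgOfEq k hsup
  exact (((EA.toLinearEquiv.trans EB.toLinearEquiv).trans EC.toLinearEquiv).trans E2)



/-- Abstract parity obstruction: if `ξ² = 0`, `ann ξ = (ξ)`, the `ξ`-torsion of the ideal
`NI` is `ξR₀`, `R₀ ⧸ NI` is `n`-dimensional, and there is a Riedtmann–Zwara-type exact
sequence `0 → Z → R₀ × Z → NI → 0` with nilpotent `g`, then `n` is even. -/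
theorem key_even {k : Type*} [Field k] {R₀ : Type*} [CommRing R₀] [Algebra k R₀] (ξ : R₀)
    (hξ2 : ξ * ξ = 0) (hann : ∀ r : R₀, ξ * r = 0 → ∃ s, r = ξ * s)
    (NI : Ideal R₀) (hξN : ξ ∈ NI)
    (hK : ∀ v : R₀, v ∈ NI → ξ * v = 0 → ∃ a, v = ξ * a)
    {n : ℕ} (eqv : (R₀ ⧸ NI) ≃ₗ[k] (Fin n → k))
    {Z : Type*} [AddCommGroup Z] [Module R₀ Z] [Module k Z] [IsScalarTower k R₀ Z]
    (hmap : Z →ₗ[R₀] R₀) (g : Z →ₗ[R₀] Z) (p : R₀ × Z →ₗ[R₀] ↥NI)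
    (hgnil : IsNilpotent g) (hinj : Function.Injective (hmap.prod g))
    (hex : LinearMap.range (hmap.prod g) = LinearMap.ker p)
    (hsurj : Function.Surjective p) : Even n := by
  classical
  obtain ⟨t, hgt⟩ := hgnil
  set f : Z →ₗ[R₀] R₀ × Z := hmap.prod g with hfdef
  have hfapp : ∀ z : Z, f z = (hmap z, g z) := fun z => rfl
  -- multiplication by ξ on Z
  set eZ : Z →ₗ[R₀] Z := LinearMap.lsmul R₀ Z ξ with heZ
  set KZ : Submodule R₀ Z := LinearMap.ker eZ with hKZ
  have hKZmem : ∀ z : Z, z ∈ KZ ↔ ξ • z = 0 := fun z => Iff.rfl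
  set E : Submodule R₀ ↥KZ := (LinearMap.range eZ).comap KZ.subtype with hE
  have hEmem : ∀ z : ↥KZ, z ∈ E ↔ ∃ z₁ : Z, ξ • z₁ = (z : Z) := fun z => Iff.rfl
  -- the nilpotent endomorphism α of W = KZ ⧸ ξZ
  have hgKZ : ∀ x ∈ KZ, g x ∈ KZ := by
    intro x hx
    have hx' : ξ • x = 0 := (hKZmem x).1 hx
    show ξ • g x = 0
    rw [← map_smul, hx', map_zero]
  set g' : ↥KZ →ₗ[R₀] ↥KZ := g.restrict hgKZ with hg'
  have hg'app : ∀ z : ↥KZ, (g' z : Z) = g (z : Z) := fun z => rfl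
  have hgE : E ≤ E.comap g' := by
    intro z hz
    obtain ⟨z₁, hz₁⟩ := (hEmem z).1 hz
    refine (hEmem (g' z)).2 ⟨g z₁, ?_⟩
    rw [hg'app, ← hz₁, map_smul]
  set α : (↥KZ ⧸ E) →ₗ[R₀] (↥KZ ⧸ E) := Submodule.mapQ E E g' hgE with hα
  have hαapp : ∀ z : ↥KZ, α (Submodule.Quotient.mk z) = Submodule.Quotient.mk (g' z) := by
    intro z
    rw [hα]
    rfl
  -- ξ-torsion in NI
  set eN : ↥NI →ₗ[R₀] ↥NI := LinearMap.lsmul R₀ ↥NI ξ with heN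
  set KN : Submodule R₀ ↥NI := LinearMap.ker eN with hKN
  have hKNmem : ∀ v : ↥NI, v ∈ KN ↔ ξ • v = 0 := fun v => Iff.rfl
  set Ψ₀ : R₀ →ₗ[R₀] ↥NI := LinearMap.toSpanSingleton R₀ ↥NI ⟨ξ, hξN⟩ with hΨ₀
  have hΨ₀app : ∀ a : R₀, ((Ψ₀ a : ↥NI) : R₀) = a * ξ := by
    intro a
    show ((a • (⟨ξ, hξN⟩ : ↥NI) : ↥NI) : R₀) = a * ξ
    simp [smul_eq_mul]
  have hΨmem : ∀ a : R₀, Ψ₀ a ∈ KN := by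
    intro a
    refine (hKNmem _).2 ?_
    apply Subtype.ext
    show ((ξ • (Ψ₀ a : ↥NI) : ↥NI) : R₀) = ((0 : ↥NI) : R₀)
    rw [SetLike.val_smul, hΨ₀app, smul_eq_mul, ZeroMemClass.coe_zero]
    calc ξ * (a * ξ) = a * (ξ * ξ) := by ring
    _ = 0 := by rw [hξ2, mul_zero]
  set Ψt : R₀ →ₗ[R₀] ↥KN := Ψ₀.codRestrict KN hΨmem with hΨt
  have hΨtapp : ∀ a : R₀, ((Ψt a : ↥NI) : R₀) = a * ξ := fun a => hΨ₀app a
  have hΨsurj : Function.Surjective Ψt := by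
    intro v
    have hv2 : ξ * ((v : ↥NI) : R₀) = 0 := by
      have h0 : ξ • ((v : ↥NI)) = 0 := (hKNmem _).1 v.2
      have := congrArg (Subtype.val) h0
      rwa [SetLike.val_smul, smul_eq_mul, ZeroMemClass.coe_zero] at this
    obtain ⟨a, ha⟩ := hK _ (v : ↥NI).2 hv2
    refine ⟨a, ?_⟩
    apply Subtype.ext; apply Subtype.ext
    rw [hΨtapp a, ha, mul_comm]
  have hkerΨt : ∀ a : R₀, Ψt a = 0 ↔ ξ * a = 0 := by
    intro a
    constructor
    · intro ha
      have := congrArg (fun v : ↥KN => ((v : ↥NI) : R₀)) ha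
      simp only [hΨtapp] at this
      rw [mul_comm]
      simpa using this
    · intro ha
      apply Subtype.ext; apply Subtype.ext
      rw [hΨtapp]
      simpa [mul_comm] using ha
  -- the submodule U and the connecting construction
  set eB : R₀ × Z →ₗ[R₀] R₀ × Z := LinearMap.lsmul R₀ (R₀ × Z) ξ with heB
  set U : Submodule R₀ (R₀ × Z) := (LinearMap.range f).comap eB with hU
  have hUmem : ∀ u : R₀ × Z, u ∈ U ↔ ξ • u ∈ LinearMap.range f := fun u => Iff.rfl
  set eqvf : Z ≃ₗ[R₀] ↥(LinearMap.range f) := LinearEquiv.ofInjective f hinj with heqvf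
  set inner : ↥U →ₗ[R₀] ↥(LinearMap.range f) :=
    (eB ∘ₗ U.subtype).codRestrict (LinearMap.range f) (fun u => u.2) with hinner
  set lift1 : ↥U →ₗ[R₀] Z := (eqvf.symm : ↥(LinearMap.range f) →ₗ[R₀] Z) ∘ₗ inner with hlift1def
  have hlift1 : ∀ u : ↥U, f (lift1 u) = ξ • (u : R₀ × Z) := by
    intro u
    show f (eqvf.symm (inner u)) = ξ • (u : R₀ × Z)
    have h1 : (eqvf (eqvf.symm (inner u)) : R₀ × Z) = ((inner u : ↥(LinearMap.range f)) : R₀ × Z) := by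
      rw [LinearEquiv.apply_symm_apply]
    have h2 : (eqvf (eqvf.symm (inner u)) : R₀ × Z) = f (eqvf.symm (inner u)) := rfl
    rw [← h2, h1]
    rfl
  have hlift1KZ : ∀ u : ↥U, lift1 u ∈ KZ := by
    intro u
    refine (hKZmem _).2 ?_
    apply hinj
    rw [map_zero, map_smul, hlift1 u]
    show ξ • ξ • (u : R₀ × Z) = 0
    rw [smul_smul, hξ2, zero_smul]
  set lift2 : ↥U →ₗ[R₀] ↥KZ := lift1.codRestrict KZ hlift1KZ with hlift2
  have hlift2app : ∀ u : ↥U, (lift2 u : Z) = lift1 u := fun u => rfl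
  set δ₀ : ↥U →ₗ[R₀] (↥KZ ⧸ E) := E.mkQ ∘ₗ lift2 with hδ₀
  have hδ₀app : ∀ u : ↥U, δ₀ u = Submodule.Quotient.mk (lift2 u) := fun u => rfl
  set pU : ↥U →ₗ[R₀] ↥NI := p ∘ₗ U.subtype with hpU
  have hpUKN : ∀ u : ↥U, pU u ∈ KN := by
    intro u
    refine (hKNmem _).2 ?_
    show ξ • p (u : R₀ × Z) = 0
    rw [← map_smul]
    have : ξ • (u : R₀ × Z) ∈ LinearMap.ker p := hex ▸ u.2
    exact this
  set pt : ↥U →ₗ[R₀] ↥KN := pU.codRestrict KN hpUKN with hpt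
  have hptapp : ∀ u : ↥U, ((pt u : ↥NI)) = p (u : R₀ × Z) := fun u => rfl
  have hptsurj : Function.Surjective pt := by
    intro v
    obtain ⟨u, hu⟩ := hsurj (v : ↥NI)
    have hv0 : ξ • ((v : ↥NI)) = 0 := (hKNmem _).1 v.2
    have huU : u ∈ U := by
      refine (hUmem u).2 ?_
      rw [hex, LinearMap.mem_ker, map_smul, hu, hv0]
    exact ⟨⟨u, huU⟩, Subtype.ext (by rw [hptapp]; exact hu)⟩
  set e₃ : (↥U ⧸ LinearMap.ker pt) ≃ₗ[R₀] ↥KN := pt.quotKerEquivOfSurjective hptsurj with he₃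
  have he₃app : ∀ u : ↥U, e₃ (Submodule.Quotient.mk u) = pt u := by
    intro u
    rfl
  have hδ₀ker : LinearMap.ker pt ≤ LinearMap.ker δ₀ := by
    intro u hu
    rw [LinearMap.mem_ker] at hu ⊢
    have hpu : p (u : R₀ × Z) = 0 := by
      have := congrArg (fun v : ↥KN => (v : ↥NI)) hu
      simpa [hptapp] using this
    have hmem : (u : R₀ × Z) ∈ LinearMap.range f := by
      rw [hex, LinearMap.mem_ker]; exact hpu
    obtain ⟨z, hz⟩ := hmem
    have hl : lift1 u = ξ • z := by
      apply hinj
      rw [hlift1 u, map_smul, hz]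
    rw [hδ₀app, Submodule.Quotient.mk_eq_zero]
    exact (hEmem _).2 ⟨z, by rw [hlift2app, hl]⟩
  set δ₁ : (↥U ⧸ LinearMap.ker pt) →ₗ[R₀] (↥KZ ⧸ E) :=
    Submodule.liftQ (LinearMap.ker pt) δ₀ hδ₀ker with hδ₁
  set Δ : R₀ →ₗ[R₀] (↥KZ ⧸ E) :=
    δ₁ ∘ₗ (e₃.symm : ↥KN →ₗ[R₀] (↥U ⧸ LinearMap.ker pt)) ∘ₗ Ψt with hΔ
  have hΔspec : ∀ (a : R₀) (u : ↥U), pt u = Ψt a → Δ a = δ₀ u := by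
    intro a u hu
    have h1 : e₃.symm (Ψt a) = Submodule.Quotient.mk u := by
      apply e₃.injective
      rw [LinearEquiv.apply_symm_apply, he₃app u, hu]
    show δ₁ (e₃.symm (Ψt a)) = δ₀ u
    rw [h1]
    exact Submodule.liftQ_apply _ _ _
  -- the map Λ
  set e₂ : (R₀ ⧸ LinearMap.ker Ψt) ≃ₗ[R₀] ↥KN := Ψt.quotKerEquivOfSurjective hΨsurj with he₂
  have he₂app : ∀ a : R₀, e₂ (Submodule.Quotient.mk a) = Ψt a := fun a => rfl
  have he₂spec : ∀ (c : R₀) (v : ↥KN), Ψt c = v → e₂.symm v = Submodule.Quotient.mk c := by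
    intro c v hv
    apply e₂.injective
    rw [LinearEquiv.apply_symm_apply, he₂app, hv]
  have hpinr : ∀ z : ↥KZ, p (0, (z : Z)) ∈ KN := by
    intro z
    refine (hKNmem _).2 ?_
    show ξ • p (0, (z : Z)) = 0
    rw [← map_smul]
    have h1 : ξ • ((0, (z : Z)) : R₀ × Z) = ((0, 0) : R₀ × Z) := by
      have hz : ξ • (z : Z) = 0 := (hKZmem _).1 z.2
      rw [Prod.smul_mk, hz, smul_zero]
    rw [h1]
    exact map_zero p
  set Λ₀ : ↥KZ →ₗ[R₀] ↥KN :=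
    ((p ∘ₗ LinearMap.inr R₀ R₀ Z) ∘ₗ KZ.subtype).codRestrict KN hpinr with hΛ₀
  have hΛ₀app : ∀ z : ↥KZ, ((Λ₀ z : ↥NI)) = p (0, (z : Z)) := fun z => rfl
  have hkerΨtNI : LinearMap.ker Ψt ≤ NI := by
    intro a ha
    rw [LinearMap.mem_ker] at ha
    obtain ⟨s, hs⟩ := hann a ((hkerΨt a).1 ha)
    show a ∈ NI
    rw [hs]
    exact Ideal.mul_mem_right s NI hξN
  set π : (R₀ ⧸ LinearMap.ker Ψt) →ₗ[R₀] (R₀ ⧸ (NI)) :=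
    Submodule.mapQ _ _ LinearMap.id hkerΨtNI with hπ
  have hπapp : ∀ a : R₀, π (Submodule.Quotient.mk a) = Submodule.Quotient.mk a :=
    fun a => rfl
  set Λ₁ : ↥KZ →ₗ[R₀] (R₀ ⧸ (NI)) :=
    π ∘ₗ (e₂.symm : ↥KN →ₗ[R₀] (R₀ ⧸ LinearMap.ker Ψt)) ∘ₗ Λ₀ with hΛ₁
  have hΛ₁spec : ∀ (z : ↥KZ) (c : R₀), Ψt c = Λ₀ z → Λ₁ z = Submodule.Quotient.mk c := by
    intro z c hc
    show π (e₂.symm (Λ₀ z)) = _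
    rw [he₂spec c _ hc, hπapp]
  have hΛ₁E : E ≤ LinearMap.ker Λ₁ := by
    intro z hz
    rw [LinearMap.mem_ker]
    obtain ⟨z₁, hz₁⟩ := (hEmem z).1 hz
    set c : R₀ := ((p (0, z₁) : ↥NI) : R₀) with hc
    have hΨc : Ψt c = Λ₀ z := by
      apply Subtype.ext; apply Subtype.ext
      rw [hΨtapp]
      show c * ξ = ((Λ₀ z : ↥NI) : R₀)
      have h1 : ((Λ₀ z : ↥NI)) = p (0, (z : Z)) := hΛ₀app z
      have h2 : ((0, (z : Z)) : R₀ × Z) = ξ • ((0, z₁) : R₀ × Z) := by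
        rw [Prod.smul_mk, smul_zero, hz₁]
      rw [h1, h2, map_smul]
      show c * ξ = ((ξ • (p (0, z₁)) : ↥NI) : R₀)
      rw [SetLike.val_smul, smul_eq_mul, ← hc, mul_comm]
    rw [hΛ₁spec z c hΨc, Submodule.Quotient.mk_eq_zero]
    exact (p (0, z₁) : ↥NI).2
  set Λt : (↥KZ ⧸ E) →ₗ[R₀] (R₀ ⧸ (NI)) := Submodule.liftQ E Λ₁ hΛ₁E with hΛt
  have hΛtapp : ∀ z : ↥KZ, Λt (Submodule.Quotient.mk z) = Λ₁ z :=
    fun z => Submodule.liftQ_apply _ _ _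

  -- ============ exactness facts ============
  have hF4 : ∀ a ∈ NI, Δ a = 0 := by
    intro a ha
    obtain ⟨u₀, hu₀⟩ := hsurj ⟨a, ha⟩
    have hξξ : ξ • (ξ • u₀) = (0 : R₀ × Z) := by rw [smul_smul, hξ2, zero_smul]
    have hU0 : ξ • u₀ ∈ U := by
      refine (hUmem _).2 ?_
      rw [hξξ]
      exact Submodule.zero_mem _
    set u : ↥U := ⟨ξ • u₀, hU0⟩ with hudef
    have hptu : pt u = Ψt a := by
      apply Subtype.ext; apply Subtype.ext
      rw [hΨtapp]
      show ((p (ξ • u₀) : ↥NI) : R₀) = a * ξ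
      rw [map_smul, hu₀, SetLike.val_smul, smul_eq_mul]
      exact mul_comm ξ a
    rw [hΔspec a u hptu, hδ₀app, Submodule.Quotient.mk_eq_zero]
    have hl : lift1 u = 0 := by
      apply hinj
      rw [hlift1, map_zero]
      exact hξξ
    exact (hEmem _).2 ⟨0, by rw [smul_zero, hlift2app, hl]⟩
  have hF1a : ∀ a : R₀, α (Δ a) = 0 := by
    intro a
    obtain ⟨u, hu⟩ := hptsurj (Ψt a)
    rw [hΔspec a u hu, hδ₀app, hαapp, Submodule.Quotient.mk_eq_zero]
    refine (hEmem _).2 ⟨(u : R₀ × Z).2, ?_⟩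
    have h2 : g (lift1 u) = ξ • (u : R₀ × Z).2 := by
      have h1 := congrArg Prod.snd (hlift1 u)
      rw [hfapp] at h1
      simpa using h1
    rw [hg'app, hlift2app, h2]
  have hF1b : ∀ w : ↥KZ ⧸ E, α w = 0 → ∃ a : R₀, Δ a = w := by
    intro w hw
    obtain ⟨z, rfl⟩ := Submodule.Quotient.mk_surjective E w
    rw [hαapp, Submodule.Quotient.mk_eq_zero] at hw
    obtain ⟨z₁, hz₁⟩ := (hEmem _).1 hw
    rw [hg'app] at hz₁
    have hξh : ξ * hmap (z : Z) = 0 := by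
      rw [← smul_eq_mul, ← map_smul, (hKZmem _).1 z.2, map_zero]
    obtain ⟨m₁, hm₁⟩ := hann (hmap (z : Z)) hξh
    have hfz : f ((z : Z)) = ξ • ((m₁, z₁) : R₀ × Z) := by
      rw [hfapp, Prod.smul_mk, hm₁, smul_eq_mul, ← hz₁]
    have hu₀U : ((m₁, z₁) : R₀ × Z) ∈ U := by
      refine (hUmem _).2 ?_
      rw [← hfz]
      exact ⟨(z : Z), rfl⟩
    set u : ↥U := ⟨(m₁, z₁), hu₀U⟩ with hudef
    have hpuKN : pU u ∈ KN := hpUKN u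
    obtain ⟨a, ha⟩ := hΨsurj ⟨pU u, hpuKN⟩
    refine ⟨a, ?_⟩
    have hpt : pt u = Ψt a := by
      apply Subtype.ext
      rw [ha]
      rfl
    rw [hΔspec a u hpt, hδ₀app]
    have hl : lift2 u = z := by
      apply Subtype.ext
      rw [hlift2app]
      apply hinj
      rw [hlift1 u, hfz]
    rw [hl]
  have hF2a : ∀ w : ↥KZ ⧸ E, Λt (α w) = 0 := by
    intro w
    obtain ⟨z, rfl⟩ := Submodule.Quotient.mk_surjective E w
    rw [hαapp, hΛtapp]
    have hξh : ξ * hmap (z : Z) = 0 := by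
      rw [← smul_eq_mul, ← map_smul, (hKZmem _).1 z.2, map_zero]
    obtain ⟨m₁, hm₁⟩ := hann (hmap (z : Z)) hξh
    set c : R₀ := -(((p ((m₁, (0 : Z))) : ↥NI) : R₀)) with hc
    have hΨc : Ψt c = Λ₀ (g' z) := by
      apply Subtype.ext; apply Subtype.ext
      rw [hΨtapp]
      show c * ξ = ((p (0, (g' z : Z)) : ↥NI) : R₀)
      have hsplit : ((0, (g' z : Z)) : R₀ × Z) = f (z : Z) - ξ • ((m₁, (0 : Z)) : R₀ × Z) := by
        rw [hfapp, Prod.smul_mk, smul_zero, smul_eq_mul, ← hm₁, hg'app]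
        exact Prod.ext (by simp) (by simp)
      have hfz0 : p (f (z : Z)) = 0 := by
        have : f (z : Z) ∈ LinearMap.ker p := hex ▸ ⟨(z : Z), rfl⟩
        exact this
      rw [hsplit, map_sub, map_smul, hfz0, zero_sub]
      have : ((-(ξ • p ((m₁, (0 : Z)))) : ↥NI) : R₀) = -(ξ * ((p ((m₁, (0 : Z))) : ↥NI) : R₀)) := by
        simp [smul_eq_mul]
      rw [this, hc]
      ring
    rw [hΛ₁spec _ c hΨc, Submodule.Quotient.mk_eq_zero, hc]
    exact neg_mem (p ((m₁, (0 : Z)))).2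
  have hF2b : ∀ w : ↥KZ ⧸ E, Λt w = 0 → ∃ w', α w' = w := by
    intro w hw
    obtain ⟨z, rfl⟩ := Submodule.Quotient.mk_surjective E w
    rw [hΛtapp] at hw
    obtain ⟨c, hcmk⟩ := Submodule.Quotient.mk_surjective (LinearMap.ker Ψt) (e₂.symm (Λ₀ z))
    have hΨc : Ψt c = Λ₀ z := by
      have h1 := congrArg e₂ hcmk
      rw [LinearEquiv.apply_symm_apply, he₂app] at h1
      exact h1
    have hc0 : c ∈ NI := by
      have h2 : Λ₁ z = Submodule.Quotient.mk c := hΛ₁spec z c hΨc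
      rw [h2, Submodule.Quotient.mk_eq_zero] at hw
      exact hw
    have hval : ((p (0, (z : Z)) : ↥NI) : R₀) = c * ξ := by
      have h3 := congrArg (fun v : ↥KN => ((v : ↥NI) : R₀)) hΨc
      simp only [hΨtapp, hΛ₀app] at h3
      exact h3.symm
    obtain ⟨u₀, hu₀⟩ := hsurj ⟨c, hc0⟩
    have hker : ((0, (z : Z)) : R₀ × Z) - ξ • u₀ ∈ LinearMap.ker p := by
      rw [LinearMap.mem_ker, map_sub, map_smul, hu₀, sub_eq_zero]
      apply Subtype.ext
      have hcoe : ((ξ • (⟨c, hc0⟩ : ↥NI) : ↥NI) : R₀) = ξ * c := by simp [smul_eq_mul]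
      rw [hcoe, hval]
      exact mul_comm c ξ
    rw [← hex] at hker
    obtain ⟨z₀, hz₀⟩ := hker
    have hz₀KZ : z₀ ∈ KZ := by
      refine (hKZmem _).2 ?_
      apply hinj
      rw [map_zero, map_smul, hz₀, smul_sub, smul_smul, hξ2, zero_smul, sub_zero, Prod.smul_mk,
        smul_zero, (hKZmem _).1 z.2]
      rfl
    refine ⟨Submodule.Quotient.mk ⟨z₀, hz₀KZ⟩, ?_⟩
    rw [hαapp, Submodule.Quotient.eq]
    refine (hEmem _).2 ⟨-(u₀.2), ?_⟩
    have hsnd := congrArg Prod.snd hz₀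
    have hgz₀ : g z₀ = (z : Z) - ξ • u₀.2 := by
      rw [hfapp] at hsnd
      simpa using hsnd
    show ξ • (-(u₀.2)) = ((g' ⟨z₀, hz₀KZ⟩ - z : ↥KZ) : Z)
    rw [smul_neg]
    have hcoe2 : ((g' ⟨z₀, hz₀KZ⟩ - z : ↥KZ) : Z) = g z₀ - (z : Z) := by
      have : ((g' ⟨z₀, hz₀KZ⟩ : ↥KZ) : Z) = g z₀ := hg'app _
      rw [AddSubgroupClass.coe_sub, this]
    rw [hcoe2, hgz₀]
    abel
  have hF3a : ∀ a : R₀, Δ a = 0 → ∃ w, Λt w = Submodule.Quotient.mk a := by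
    intro a ha
    obtain ⟨u, hu⟩ := hptsurj (Ψt a)
    have hδu : δ₀ u = 0 := by rw [← hΔspec a u hu]; exact ha
    rw [hδ₀app, Submodule.Quotient.mk_eq_zero] at hδu
    obtain ⟨z₁, hz₁⟩ := (hEmem _).1 hδu
    rw [hlift2app] at hz₁
    set u' : R₀ × Z := (u : R₀ × Z) - f z₁ with hu'def
    have hξu' : ξ • u' = 0 := by
      rw [hu'def, smul_sub, ← hlift1 u, ← map_smul, hz₁, sub_self]
    have h1 : ξ • u'.1 = 0 := by
      have := congrArg Prod.fst hξu'
      simpa using this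
    have h2 : ξ • u'.2 = 0 := by
      have := congrArg Prod.snd hξu'
      simpa using this
    obtain ⟨m₁, hm₁⟩ := hann u'.1 (by rwa [← smul_eq_mul])
    have hz' : u'.2 ∈ KZ := (hKZmem _).2 h2
    have hpu' : p u' = Ψ₀ a := by
      have hfz₁0 : p (f z₁) = 0 := by
        have : f z₁ ∈ LinearMap.ker p := hex ▸ ⟨z₁, rfl⟩
        exact this
      have hpua : p (u : R₀ × Z) = Ψ₀ a := congrArg Subtype.val hu
      rw [hu'def, map_sub, hfz₁0, sub_zero, hpua]
    set c : R₀ := a - ((p ((m₁, (0 : Z))) : ↥NI) : R₀) with hcdef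
    have hΨc : Ψt c = Λ₀ ⟨u'.2, hz'⟩ := by
      apply Subtype.ext; apply Subtype.ext
      rw [hΨtapp]
      show c * ξ = ((p (0, u'.2) : ↥NI) : R₀)
      have hdec : ((0, u'.2) : R₀ × Z) = u' - ξ • ((m₁, (0 : Z)) : R₀ × Z) := by
        rw [Prod.smul_mk, smul_zero, smul_eq_mul, ← hm₁]
        exact Prod.ext (by simp) (by simp)
      rw [hdec, map_sub, map_smul, hpu']
      have hval2 : ((Ψ₀ a - ξ • p ((m₁, (0 : Z))) : ↥NI) : R₀)
          = a * ξ - ξ * ((p ((m₁, (0 : Z))) : ↥NI) : R₀) := by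
        rw [AddSubgroupClass.coe_sub, hΨ₀app, SetLike.val_smul, smul_eq_mul]
      rw [hval2, hcdef]
      ring
    refine ⟨Submodule.Quotient.mk ⟨u'.2, hz'⟩, ?_⟩
    rw [hΛtapp, hΛ₁spec _ c hΨc, Submodule.Quotient.eq]
    have : c - a = -((p ((m₁, (0 : Z))) : ↥NI) : R₀) := by rw [hcdef]; ring
    rw [this]
    exact neg_mem (p ((m₁, (0 : Z)))).2
  have hF3b : ∀ z : ↥KZ, ∃ a : R₀, Δ a = 0 ∧
      Λt (Submodule.Quotient.mk z) = Submodule.Quotient.mk a := by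
    intro z
    obtain ⟨c, hcmk⟩ := Submodule.Quotient.mk_surjective (LinearMap.ker Ψt) (e₂.symm (Λ₀ z))
    have hΨc : Ψt c = Λ₀ z := by
      have h1 := congrArg e₂ hcmk
      rw [LinearEquiv.apply_symm_apply, he₂app] at h1
      exact h1
    have hU0 : ((0, (z : Z)) : R₀ × Z) ∈ U := by
      refine (hUmem _).2 ?_
      have hz : ξ • ((0, (z : Z)) : R₀ × Z) = 0 := by
        rw [Prod.smul_mk, smul_zero, (hKZmem _).1 z.2]
        rfl
      rw [hz]
      exact Submodule.zero_mem _
    refine ⟨c, ?_, ?_⟩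
    · have hpt : pt ⟨(0, (z : Z)), hU0⟩ = Ψt c := by
        apply Subtype.ext
        show p (0, (z : Z)) = (Ψt c : ↥NI)
        rw [hΨc]
        rfl
      rw [hΔspec c _ hpt, hδ₀app, Submodule.Quotient.mk_eq_zero]
      have hl : lift1 ⟨(0, (z : Z)), hU0⟩ = 0 := by
        apply hinj
        rw [hlift1, map_zero, Prod.smul_mk, smul_zero, (hKZmem _).1 z.2]
        rfl
      exact (hEmem _).2 ⟨0, by rw [smul_zero, hlift2app, hl]⟩
    · rw [hΛtapp, hΛ₁spec z c hΨc]
  -- ============ k-linear bookkeeping ============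
  set Δk : R₀ →ₗ[k] (↥KZ ⧸ E) := Δ.restrictScalars k with hΔkdef
  set αk : (↥KZ ⧸ E) →ₗ[k] (↥KZ ⧸ E) := α.restrictScalars k with hαkdef
  set NIk : Submodule k R₀ := NI.restrictScalars k with hNIkdef
  set br : (R₀ ⧸ NIk) ≃ₗ[k] (R₀ ⧸ NI) := Submodule.Quotient.restrictScalarsEquiv k NI with hbrdef
  set Λk : (↥KZ ⧸ E) →ₗ[k] (R₀ ⧸ NIk) :=
    (br.symm : (R₀ ⧸ NI) →ₗ[k] (R₀ ⧸ NIk)) ∘ₗ (Λt.restrictScalars k) with hΛkdef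
  have hΛkapp : ∀ w, Λk w = br.symm (Λt w) := fun w => rfl
  have hF1k : LinearMap.range Δk = LinearMap.ker αk := by
    apply le_antisymm
    · rintro w ⟨a, rfl⟩
      rw [LinearMap.mem_ker]
      exact hF1a a
    · intro w hw
      obtain ⟨a, ha⟩ := hF1b w hw
      exact ⟨a, ha⟩
  have hF2k : LinearMap.ker Λk = LinearMap.range αk := by
    apply le_antisymm
    · intro w hw
      have h0 : Λt w = 0 := by
        have h1 : br.symm (Λt w) = br.symm 0 := by
          rw [map_zero]
          exact hw
        exact br.symm.injective h1
      obtain ⟨w', hw'⟩ := hF2b w h0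
      exact ⟨w', hw'⟩
    · rintro w ⟨w', rfl⟩
      rw [LinearMap.mem_ker]
      show br.symm (Λt (α w')) = 0
      rw [hF2a w', map_zero]
  have hF4k : NIk ≤ LinearMap.ker Δk := fun a ha => hF4 a ha
  have hF3k : Submodule.map (Submodule.mkQ NIk) (LinearMap.ker Δk) = LinearMap.range Λk := by
    apply le_antisymm
    · rintro x ⟨a, ha, rfl⟩
      obtain ⟨w, hww⟩ := hF3a a ha
      refine ⟨w, ?_⟩
      show br.symm (Λt w) = Submodule.mkQ NIk a
      rw [hww, Submodule.mkQ_apply]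
      exact Submodule.Quotient.restrictScalarsEquiv_symm_mk k NI a
    · rintro x ⟨w, rfl⟩
      obtain ⟨z, rfl⟩ := Submodule.Quotient.mk_surjective E w
      obtain ⟨a, haΔ, haΛ⟩ := hF3b z
      refine ⟨a, haΔ, ?_⟩
      show Submodule.mkQ NIk a = br.symm (Λt (Submodule.Quotient.mk z))
      rw [haΛ, Submodule.mkQ_apply]
      exact (Submodule.Quotient.restrictScalarsEquiv_symm_mk k NI a).symm
  -- nilpotence of αk
  have hαkpow : ∀ (i : ℕ) (w : ↥KZ ⧸ E), (αk ^ i) w = (α ^ i) w := by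
    intro i
    induction i with
    | zero => intro w; rfl
    | succ i ih =>
      intro w
      rw [pow_succ, pow_succ, Module.End.mul_apply, Module.End.mul_apply, ih (αk w)]
      rfl
  have hg'pow : ∀ (i : ℕ) (z : ↥KZ), (((g' ^ i) z : ↥KZ) : Z) = (g ^ i) (z : Z) := by
    intro i
    induction i with
    | zero => intro z; rfl
    | succ i ih =>
      intro z
      rw [pow_succ, pow_succ, Module.End.mul_apply, Module.End.mul_apply, ih (g' z), hg'app]
  have hαpow : ∀ (i : ℕ) (z : ↥KZ),
      (α ^ i) (Submodule.Quotient.mk z) = Submodule.Quotient.mk ((g' ^ i) z) := by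
    intro i
    induction i with
    | zero => intro z; rfl
    | succ i ih =>
      intro z
      rw [pow_succ', pow_succ', Module.End.mul_apply, Module.End.mul_apply, ih z, hαapp]
  have hαknil : ∀ w : ↥KZ ⧸ E, (αk ^ t) w = 0 := by
    intro w
    obtain ⟨z, rfl⟩ := Submodule.Quotient.mk_surjective E w
    rw [hαkpow, hαpow]
    have h0 : (g' ^ t) z = 0 := by
      apply Subtype.ext
      rw [hg'pow t z, hgt]
      rfl
    rw [h0]
    rfl
  -- finite dimensionality
  haveI hfd0 : FiniteDimensional k (R₀ ⧸ NIk) := Module.Finite.equiv (br.trans eqv).symm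
  haveI hfddq : FiniteDimensional k
      ((R₀ ⧸ NIk) ⧸ Submodule.map (Submodule.mkQ NIk) (LinearMap.ker Δk)) :=
    inferInstance
  have qqe := Submodule.quotientQuotientEquivQuotient NIk (LinearMap.ker Δk) hF4k
  haveI hfdQ2 : FiniteDimensional k (R₀ ⧸ LinearMap.ker Δk) := Module.Finite.equiv qqe
  haveI hfdrange : FiniteDimensional k ↥(LinearMap.range Δk) :=
    Module.Finite.equiv Δk.quotKerEquivRange
  haveI hfdkerα : FiniteDimensional k ↥(LinearMap.ker αk) := hF1k ▸ hfdrange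
  have hfdi : ∀ i : ℕ, FiniteDimensional k ↥(LinearMap.ker (αk ^ i)) := by
    intro i
    induction i with
    | zero =>
      rw [pow_zero]
      have hbot : LinearMap.ker (1 : (↥KZ ⧸ E) →ₗ[k] (↥KZ ⧸ E)) = ⊥ := LinearMap.ker_id
      rw [hbot]
      infer_instance
    | succ i ih =>
      have hres : ∀ x ∈ LinearMap.ker (αk ^ (i + 1)), αk x ∈ LinearMap.ker (αk ^ i) := by
        intro x hx
        rw [LinearMap.mem_ker] at hx ⊢
        rw [← Module.End.mul_apply, ← pow_succ]
        exact hx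
      set β : ↥(LinearMap.ker (αk ^ (i + 1))) →ₗ[k] ↥(LinearMap.ker (αk ^ i)) :=
        αk.restrict hres with hβdef
      haveI hfdkerβ : FiniteDimensional k ↥(LinearMap.ker β) := by
        have hjmem : ∀ w : ↥(LinearMap.ker β),
            (((w : ↥(LinearMap.ker (αk ^ (i + 1)))) : ↥KZ ⧸ E)) ∈ LinearMap.ker αk := by
          intro w
          rw [LinearMap.mem_ker]
          have h1 : ((β (w : ↥(LinearMap.ker (αk ^ (i + 1)))) : ↥(LinearMap.ker (αk ^ i))) : ↥KZ ⧸ E)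
              = αk ((w : ↥(LinearMap.ker (αk ^ (i + 1)))) : ↥KZ ⧸ E) :=
            LinearMap.restrict_coe_apply _ _ _
          rw [← h1, w.2]
          rfl
        set j : ↥(LinearMap.ker β) →ₗ[k] ↥(LinearMap.ker αk) :=
          LinearMap.codRestrict (LinearMap.ker αk)
            ((LinearMap.ker (αk ^ (i + 1))).subtype ∘ₗ (LinearMap.ker β).subtype) hjmem with hjdef
        have hjinj : Function.Injective j := by
          intro w₁ w₂ hw
          have := congrArg (fun v : ↥(LinearMap.ker αk) => (v : ↥KZ ⧸ E)) hw
          exact Subtype.ext (Subtype.ext this)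
        exact FiniteDimensional.of_injective j hjinj
      have hfg : (⊤ : Submodule k ↥(LinearMap.ker (αk ^ (i + 1)))).FG := by
        apply Submodule.fg_of_fg_map_of_fg_inf_ker β
        · haveI := ih
          exact IsNoetherian.noetherian _
        · rw [top_inf_eq]
          have h1 : (⊤ : Submodule k ↥(LinearMap.ker β)).FG := Module.finite_def.1 hfdkerβ
          have h2 := Submodule.fg_top (LinearMap.ker β)
          rw [← h2]
          exact h1
      exact Module.finite_def.2 hfg
  haveI hfdW : FiniteDimensional k (↥KZ ⧸ E) := by
    have hker : LinearMap.ker (αk ^ t) = ⊤ := by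
      rw [eq_top_iff]
      intro w _
      rw [LinearMap.mem_ker]
      exact hαknil w
    have h1 := hfdi t
    rw [hker] at h1
    exact Module.Finite.equiv (Submodule.topEquiv)
  -- counting
  have hrn1 := LinearMap.finrank_range_add_finrank_ker αk
  have hrn2 := LinearMap.finrank_range_add_finrank_ker Λk
  have hq := Submodule.finrank_quotient_add_finrank (LinearMap.range Λk)
  have hn : Module.finrank k (R₀ ⧸ NIk) = n := by
    rw [LinearEquiv.finrank_eq (br.trans eqv)]
    exact Module.finrank_fin_fun k
  have heq1 : Module.finrank k ((R₀ ⧸ NIk) ⧸ (LinearMap.range Λk))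
      = Module.finrank k ↥(LinearMap.ker αk) := by
    rw [← hF3k]
    calc Module.finrank k ((R₀ ⧸ NIk) ⧸ Submodule.map (Submodule.mkQ NIk) (LinearMap.ker Δk))
        = Module.finrank k (R₀ ⧸ LinearMap.ker Δk) := LinearEquiv.finrank_eq qqe
      _ = Module.finrank k ↥(LinearMap.range Δk) := LinearEquiv.finrank_eq Δk.quotKerEquivRange
      _ = Module.finrank k ↥(LinearMap.ker αk) := by rw [hF1k]
  have heq2 : Module.finrank k ↥(LinearMap.ker Λk) = Module.finrank k ↥(LinearMap.range αk) := by
    rw [hF2k]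
  refine ⟨Module.finrank k ↥(LinearMap.ker αk), ?_⟩
  omega



end DegenAux

theorem free_module_does_not_degenerate_to_odd_ideal (k : Type u) [Field k]
    [IsAlgClosed k] (hchar : ringChar k ≠ 2) (m : ℕ) :
    ¬ Degenerates (AInfCurve k) (AInfCurve k) (idealXY k (2 * m + 1)) := by
  rintro ⟨D⟩
  letI := D.addCommGroupZ
  letI := D.moduleZ
  letI : Module k D.Z := Module.compHom D.Z (algebraMap k (AInfCurve k))
  letI : IsScalarTower k (AInfCurve k) D.Z :=
    ⟨fun a r z => by
      have h1 : a • r = algebraMap k (AInfCurve k) a * r := Algebra.smul_def a r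
      rw [h1, mul_smul]
      rfl⟩
  have hxiN : DegenAux.xi k ∈ idealXY k (2 * m + 1) := by
    apply Ideal.subset_span
    exact Set.mem_insert _ _
  have heven : Even (2 * m + 1) :=
    DegenAux.key_even (DegenAux.xi k) DegenAux.xi_sq DegenAux.ann_xi
      (idealXY k (2 * m + 1)) hxiN (DegenAux.mem_idealXY_ann (2 * m + 1))
      (DegenAux.quotIdealXYEquiv (2 * m + 1)) D.h D.g D.p D.nilpotent_g D.injective_first
      D.exact_middle D.surjective_last
  obtain ⟨r, hr⟩ := heven
  omega
end
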